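/- arXiv:2409.11637 — 8 statements merged into one kernel-verified Lean document; each statement's English description precedes it below -/
import Mathlib

section
/- Let 0 ≤ l ≤ n and 1 ≤ k,m ≤ n be integers with n−k ≥ m−l and l ≤ min(k,m). For any m-dimensional linear subspace W of F_p^n, the number of (n−k)-dimensional linear subspaces V of F_p^n such that #(π*_V(W)) ≤ p^l is comparable (with constants depending only on n,k,m,l) to p^{k(n-k)−(k−l)(m−l)}. -/
/-!
The condition `#π*_V(W) ≤ p^l` says `dim (V ⊓ W) ≥ j := m - l`; put `d := n - k`. Every such
`V` contains a `j`-dimensional `U ≤ W`, and the `d`-dimensional `V ≥ U` correspond to the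
`(d - j)`-dimensional subspaces of `F_p^n / U`. Conversely, if `U ≤ W` has dimension `j` and
`X ≤ F_p^n / U` of dimension `d - j` meets `W / U` trivially, then `V := π_U⁻¹ X` satisfies
`V ⊓ W = U`, so different pairs `(U, X)` give different `V`. Hence the count lies between two
products of subspace counts. The number of `j`-dimensional subspaces of a space of dimension `N`
over `F_q`, even of those meeting a fixed subspace of dimension `≤ N - j` trivially, is
`q^(j (N - j))` up to a factor `2^j`: it is read off from the number `∏ (q^N - q^i)` of linearly
independent `j`-tuples, each factor of which lies between `q^N / 2` and `q^N`. The exponents add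
up to `j l + (d - j) k = k (n - k) - (k - l) (m - l)`.
-/

open Module Submodule

section SigmaCard

variable {α : Type*} {β : α → Type*} [Finite α] [∀ a, Finite (β a)] {t u : ℕ}

attribute [local instance] Fintype.ofFinite

lemma card_sigma_le_card_mul (h : ∀ a, Nat.card (β a) ≤ t) :
    Nat.card (Σ a, β a) ≤ Nat.card α * t := by
  rw [Nat.card_sigma, Nat.card_eq_fintype_card, ← smul_eq_mul, ← Finset.card_univ,
    ← Finset.sum_const]
  exact Finset.sum_le_sum fun a _ ↦ h a

lemma card_mul_le_mul_card_sigma (h : ∀ a, t ≤ u * Nat.card (β a)) :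
    Nat.card α * t ≤ u * Nat.card (Σ a, β a) := by
  rw [Nat.card_sigma, Nat.card_eq_fintype_card, ← smul_eq_mul, ← Finset.card_univ,
    ← Finset.sum_const, Finset.mul_sum]
  exact Finset.sum_le_sum fun a _ ↦ h a

end SigmaCard

section LinearAlgebra

variable {K E : Type*} [Field K] [AddCommGroup E] [Module K E]

lemma exists_le_finrank_eq [FiniteDimensional K E] (P : Submodule K E) {j : ℕ}
    (hj : j ≤ finrank K P) : ∃ U ≤ P, finrank K U = j := by
  obtain ⟨f, hf⟩ := exists_linearIndependent_of_le_finrank hj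
  exact ⟨(span K (Set.range f)).map P.subtype, map_subtype_le _ _, by
    rw [finrank_map_subtype_eq, finrank_span_eq_card hf, Fintype.card_fin]⟩

lemma span_range_subtype_comp_eq [FiniteDimensional K E] {j : ℕ} {U : Submodule K E}
    (hU : finrank K U = j) {t : Fin j → U} (ht : LinearIndependent K t) :
    span K (Set.range (U.subtype ∘ t)) = U := by
  have : span K (Set.range t) = ⊤ :=
    eq_top_of_finrank_eq (by rw [finrank_span_eq_card ht, Fintype.card_fin, hU])
  rw [Set.range_comp, span_image, this, map_subtype_top]

lemma finrank_map_add_finrank_ker_inf [FiniteDimensional K E] {F : Type*} [AddCommGroup F]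
    [Module K F] (f : E →ₗ[K] F) (W : Submodule K E) :
    finrank K (W.map f) + finrank K ↥(LinearMap.ker f ⊓ W) = finrank K W := by
  have h := LinearMap.finrank_range_add_finrank_ker (f.domRestrict W)
  rwa [LinearMap.range_domRestrict, LinearMap.ker_domRestrict, ← finrank_map_subtype_eq,
    map_comap_subtype, inf_comm] at h

lemma finrank_comap_mkQ [FiniteDimensional K E] (U : Submodule K E) (X : Submodule K (E ⧸ U)) :
    finrank K (X.comap U.mkQ) = finrank K X + finrank K U := by
  have h := finrank_map_add_finrank_ker_inf U.mkQ (X.comap U.mkQ)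
  rwa [map_comap_eq_of_surjective U.mkQ_surjective, ker_mkQ,
    inf_eq_left.2 (le_comap_mkQ U X), eq_comm] at h

lemma comap_mkQ_inf_eq_of_disjoint {U W : Submodule K E} (hUW : U ≤ W)
    {X : Submodule K (E ⧸ U)} (hX : Disjoint X (W.map U.mkQ)) : X.comap U.mkQ ⊓ W = U := by
  refine le_antisymm (fun x ⟨hxX, hxW⟩ ↦ ?_) (le_inf (le_comap_mkQ U X) hUW)
  rw [← ker_mkQ U, LinearMap.mem_ker, ← mem_bot K]
  exact hX.le_bot ⟨hxX, mem_map_of_mem hxW⟩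

lemma card_le_finrank_eq (P : Submodule K E) (j : ℕ) :
    Nat.card {U : Submodule K E // U ≤ P ∧ finrank K U = j} =
      Nat.card {U : Submodule K P // finrank K U = j} :=
  Nat.card_congr <| (Equiv.subtypeSubtypeEquivSubtypeInter (· ≤ P) (finrank K · = j)).symm.trans
    ((MapSubtype.orderIso P).toEquiv.subtypeEquiv fun U ↦ by
      rw [← finrank_map_subtype_eq P U]; rfl).symm

lemma card_ge_finrank_eq [FiniteDimensional K E] (U : Submodule K E) {d : ℕ}
    (hd : finrank K U ≤ d) :
    Nat.card {V : Submodule K E // U ≤ V ∧ finrank K V = d} =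
      Nat.card {X : Submodule K (E ⧸ U) // finrank K X = d - finrank K U} :=
  Nat.card_congr <| (Equiv.subtypeSubtypeEquivSubtypeInter (U ≤ ·) (finrank K · = d)).symm.trans
    ((comapMkQRelIso U).toEquiv.subtypeEquiv fun X ↦ by
      show _ ↔ finrank K (X.comap U.mkQ) = d
      rw [finrank_comap_mkQ]; omega).symm

lemma card_linearIndependent_quotient_mul_le [Finite E] (L : Submodule K E) (D : ℕ) :
    Nat.card {t : Fin D → E ⧸ L // LinearIndependent K t} * Nat.card (Fin D → L) ≤
      Nat.card {s : Fin D → E // LinearIndependent K (L.mkQ ∘ s)} := by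
  let lift := Function.surjInv L.mkQ_surjective
  have mkQ_lift_add (x : E ⧸ L) (w : L) : L.mkQ (lift x + w) = x := by
    rw [map_add, Function.surjInv_eq L.mkQ_surjective, mkQ_apply, (Quotient.mk_eq_zero L).2 w.2,
      add_zero]
  let inc : {t : Fin D → E ⧸ L // LinearIndependent K t} × (Fin D → L) →
      {s : Fin D → E // LinearIndependent K (L.mkQ ∘ s)} :=
    fun tw ↦ ⟨fun i ↦ lift (tw.1.1 i) + tw.2 i, by
      convert tw.1.2 using 1; funext i; exact mkQ_lift_add _ _⟩
  have inc_injective : Function.Injective inc := by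
    rintro ⟨t, w⟩ ⟨t', w'⟩ h
    have hs (i : Fin D) : lift (t.1 i) + w i = lift (t'.1 i) + w' i :=
      congrFun (congrArg Subtype.val h) i
    have ht : t = t' := Subtype.ext <| funext fun i ↦ by
      rw [← mkQ_lift_add (t.1 i) (w i), hs, mkQ_lift_add]
    subst ht
    exact Prod.ext rfl (funext fun i ↦ Subtype.ext (add_left_cancel (hs i)))
  rw [← Nat.card_prod]
  exact Nat.card_le_card_of_injective inc inc_injective

end LinearAlgebra

section FiniteField

variable {K E : Type*} [Field K] [Fintype K] [AddCommGroup E] [Module K E] [Finite E]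

local notation "q" => Fintype.card K

local instance (U : Submodule K E) : Finite (E ⧸ U) := Finite.of_surjective _ U.mkQ_surjective

lemma natCard_eq_card_pow_finrank : Nat.card E = q ^ finrank K E := by
  rw [Module.natCard_eq_pow_finrank (K := K), Nat.card_eq_fintype_card]

lemma card_linearIndependent_le (j : ℕ) :
    Nat.card {s : Fin j → E // LinearIndependent K s} ≤ q ^ (finrank K E * j) :=
  calc Nat.card {s : Fin j → E // LinearIndependent K s} ≤ Nat.card (Fin j → E) :=
        Finite.card_subtype_le _
    _ = q ^ (finrank K E * j) := by
        rw [Nat.card_fun, natCard_eq_card_pow_finrank (K := K), Nat.card_fin, pow_mul]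

lemma pow_le_two_pow_mul_card_linearIndependent {j : ℕ} (hj : j ≤ finrank K E) :
    q ^ (finrank K E * j) ≤ 2 ^ j * Nat.card {s : Fin j → E // LinearIndependent K s} := by
  set N := finrank K E
  have hq : 2 ≤ q := Fintype.one_lt_card
  have half_le (i : Fin j) : q ^ N ≤ 2 * (q ^ N - q ^ (i : ℕ)) := by
    have h₁ : q ^ (i : ℕ) * 2 ≤ q ^ ((i : ℕ) + 1) := by
      rw [pow_succ]; exact Nat.mul_le_mul_left _ hq
    have h₂ : q ^ ((i : ℕ) + 1) ≤ q ^ N := Nat.pow_le_pow_right (by omega) (by omega)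
    omega
  calc q ^ (N * j) = ∏ _i : Fin j, q ^ N := by simp [pow_mul]
    _ ≤ ∏ i : Fin j, 2 * (q ^ N - q ^ (i : ℕ)) := Finset.prod_le_prod' fun i _ ↦ half_le i
    _ = 2 ^ j * Nat.card {s : Fin j → E // LinearIndependent K s} := by
      simp [Finset.prod_mul_distrib, card_linearIndependent hj, N]

lemma card_finrank_eq_le {j : ℕ} (hj : j ≤ finrank K E) :
    Nat.card {U : Submodule K E // finrank K U = j} ≤ 2 ^ j * q ^ (j * (finrank K E - j)) := by
  let inc : (Σ U : {U : Submodule K E // finrank K U = j},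
      {t : Fin j → U.1 // LinearIndependent K t}) →
      {s : Fin j → E // LinearIndependent K s} :=
    fun ⟨U, t⟩ ↦ ⟨U.1.subtype ∘ t.1, t.2.map' _ U.1.ker_subtype⟩
  have inc_injective : Function.Injective inc := by
    rintro ⟨U, t⟩ ⟨U', t'⟩ h
    obtain rfl : U = U' := Subtype.ext <| by
      rw [← span_range_subtype_comp_eq U.2 t.2, ← span_range_subtype_comp_eq U'.2 t'.2]
      exact congrArg (fun s ↦ span K (Set.range s.1)) h
    congr 1
    exact Subtype.ext <| funext fun i ↦ Subtype.ext (congrFun (congrArg Subtype.val h) i)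
  have hsplit : finrank K E * j = j * (finrank K E - j) + j * j := by
    rw [← Nat.mul_add, Nat.sub_add_cancel hj, Nat.mul_comm]
  refine Nat.le_of_mul_le_mul_right ?_ (pow_pos (Fintype.card_pos (α := K)) (j * j))
  calc Nat.card {U : Submodule K E // finrank K U = j} * q ^ (j * j)
        ≤ 2 ^ j * Nat.card (Σ U : {U : Submodule K E // finrank K U = j},
          {t : Fin j → U.1 // LinearIndependent K t}) :=
        card_mul_le_mul_card_sigma fun U ↦ by
          simpa [U.2] using pow_le_two_pow_mul_card_linearIndependent (E := U.1) U.2.ge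
    _ ≤ 2 ^ j * q ^ (finrank K E * j) :=
        Nat.mul_le_mul_left _ ((Nat.card_le_card_of_injective inc inc_injective).trans
          (card_linearIndependent_le j))
    _ = _ := by rw [hsplit, pow_add, mul_assoc]

lemma card_linearIndependent_mkQ_comp_le (L : Submodule K E) (D : ℕ) :
    Nat.card {s : Fin D → E // LinearIndependent K (L.mkQ ∘ s)} ≤
      Nat.card {X : Submodule K E // finrank K X = D ∧ Disjoint X L} * q ^ (D * D) := by
  let inc : {s : Fin D → E // LinearIndependent K (L.mkQ ∘ s)} →
      Σ X : {X : Submodule K E // finrank K X = D ∧ Disjoint X L}, (Fin D → X.1) :=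
    fun s ↦ ⟨⟨span K (Set.range s.1),
      by rw [finrank_span_eq_card (s.2.of_comp), Fintype.card_fin],
      by simpa using Submodule.range_ker_disjoint s.2⟩,
      fun i ↦ ⟨s.1 i, subset_span (Set.mem_range_self i)⟩⟩
  have inc_injective : Function.Injective inc := fun s s' h ↦ Subtype.ext <| funext fun i ↦
    congrArg (fun x : Σ X : {X : Submodule K E // finrank K X = D ∧ Disjoint X L},
      (Fin D → X.1) ↦ ((x.2 i : x.1.1) : E)) h
  refine (Nat.card_le_card_of_injective inc inc_injective).trans
    (card_sigma_le_card_mul fun X ↦ ?_)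
  rw [Nat.card_fun, natCard_eq_card_pow_finrank (K := K), X.2.1, Nat.card_fin, pow_mul]

lemma pow_le_card_finrank_eq_disjoint (L : Submodule K E) {D : ℕ}
    (hD : D + finrank K L ≤ finrank K E) :
    q ^ (D * (finrank K E - D)) ≤
      2 ^ D * Nat.card {X : Submodule K E // finrank K X = D ∧ Disjoint X L} := by
  set N := finrank K E
  have hrank : finrank K (E ⧸ L) + finrank K L = N := L.finrank_quotient_add_finrank
  have hsplit : N * D = D * (N - D) + D * D := by
    rw [← Nat.mul_add, Nat.sub_add_cancel (by omega), Nat.mul_comm]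
  refine Nat.le_of_mul_le_mul_right ?_ (pow_pos (Fintype.card_pos (α := K)) (D * D))
  calc q ^ (D * (N - D)) * q ^ (D * D)
      = q ^ (finrank K (E ⧸ L) * D) * Nat.card (Fin D → L) := by
        rw [Nat.card_fun, natCard_eq_card_pow_finrank (K := K), Nat.card_fin, ← pow_mul,
          ← pow_add, ← pow_add, ← Nat.add_mul, hrank, hsplit]
    _ ≤ 2 ^ D * Nat.card {t : Fin D → E ⧸ L // LinearIndependent K t} *
          Nat.card (Fin D → L) :=
        Nat.mul_le_mul_right _ (pow_le_two_pow_mul_card_linearIndependent (by omega))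
    _ ≤ 2 ^ D * Nat.card {s : Fin D → E // LinearIndependent K (L.mkQ ∘ s)} := by
        rw [mul_assoc]
        exact Nat.mul_le_mul_left _ (card_linearIndependent_quotient_mul_le L D)
    _ ≤ _ := by
        rw [mul_assoc]
        exact Nat.mul_le_mul_left _ (card_linearIndependent_mkQ_comp_le L D)

lemma pow_le_card_finrank_eq {j : ℕ} (hj : j ≤ finrank K E) :
    q ^ (j * (finrank K E - j)) ≤ 2 ^ j * Nat.card {U : Submodule K E // finrank K U = j} := by
  simpa using pow_le_card_finrank_eq_disjoint (⊥ : Submodule K E) (D := j) (by simpa using hj)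

lemma natCard_image_mkQ (V W : Submodule K E) :
    Nat.card (V.mkQ '' (W : Set E)) = q ^ (finrank K W - finrank K ↥(V ⊓ W)) := by
  have h := finrank_map_add_finrank_ker_inf V.mkQ W
  rw [ker_mkQ] at h
  rw [← map_coe, SetLike.coe_sort_coe, natCard_eq_card_pow_finrank (K := K)]
  congr 1
  omega

lemma card_finrank_eq_le_finrank_inf_le (W : Submodule K E) {d j : ℕ}
    (hjW : j ≤ finrank K W) (hjd : j ≤ d) (hdE : d ≤ finrank K E) :
    Nat.card {V : Submodule K E // finrank K V = d ∧ j ≤ finrank K ↥(V ⊓ W)} ≤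
      2 ^ d * q ^ (j * (finrank K W - j) + (d - j) * (finrank K E - d)) := by
  let A := {U : Submodule K E // U ≤ W ∧ finrank K U = j}
  have hA : Nat.card A ≤ 2 ^ j * q ^ (j * (finrank K W - j)) :=
    card_le_finrank_eq W j ▸ card_finrank_eq_le hjW
  have hfiber (U : A) : Nat.card {V : Submodule K E // U.1 ≤ V ∧ finrank K V = d} ≤
      2 ^ (d - j) * q ^ ((d - j) * (finrank K E - d)) := by
    have hrank : finrank K (E ⧸ U.1) = finrank K E - j := by rw [finrank_quotient, U.2.2]
    have h := card_finrank_eq_le (K := K) (E := E ⧸ U.1) (j := d - j) (by omega)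
    rw [hrank, show finrank K E - j - (d - j) = finrank K E - d by omega] at h
    rwa [card_ge_finrank_eq U.1 (by omega), U.2.2]
  let inc : {V : Submodule K E // finrank K V = d ∧ j ≤ finrank K ↥(V ⊓ W)} →
      Σ U : A, {V : Submodule K E // U.1 ≤ V ∧ finrank K V = d} := fun V ↦
    have hU := (exists_le_finrank_eq _ V.2.2).choose_spec
    ⟨⟨_, hU.1.trans inf_le_right, hU.2⟩, V.1, hU.1.trans inf_le_left, V.2.1⟩
  have inc_injective : Function.Injective inc := fun V V' h ↦
    Subtype.ext (congrArg (fun x ↦ x.2.1) h)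
  calc _ ≤ Nat.card A * (2 ^ (d - j) * q ^ ((d - j) * (finrank K E - d))) :=
        (Nat.card_le_card_of_injective inc inc_injective).trans (card_sigma_le_card_mul hfiber)
    _ ≤ 2 ^ j * q ^ (j * (finrank K W - j)) * (2 ^ (d - j) * q ^ ((d - j) * (finrank K E - d))) :=
        Nat.mul_le_mul_right _ hA
    _ = _ := by rw [pow_add, ← pow_mul_pow_sub 2 hjd]; ring

lemma pow_le_card_finrank_eq_le_finrank_inf (W : Submodule K E) {d j : ℕ}
    (hjW : j ≤ finrank K W) (hjd : j ≤ d) (hdW : d + finrank K W ≤ finrank K E + j) :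
    q ^ (j * (finrank K W - j) + (d - j) * (finrank K E - d)) ≤
      2 ^ d * Nat.card {V : Submodule K E // finrank K V = d ∧ j ≤ finrank K ↥(V ⊓ W)} := by
  let A := {U : Submodule K E // U ≤ W ∧ finrank K U = j}
  have hA : q ^ (j * (finrank K W - j)) ≤ 2 ^ j * Nat.card A :=
    card_le_finrank_eq W j ▸ pow_le_card_finrank_eq hjW
  let B (U : A) :=
    {X : Submodule K (E ⧸ U.1) // finrank K X = d - j ∧ Disjoint X (W.map U.1.mkQ)}
  have hfiber (U : A) : q ^ ((d - j) * (finrank K E - d)) ≤ 2 ^ (d - j) * Nat.card (B U) := by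
    have hrank : finrank K (E ⧸ U.1) = finrank K E - j := by rw [finrank_quotient, U.2.2]
    have hrankW : finrank K (W.map U.1.mkQ) = finrank K W - j := by
      have h := finrank_map_add_finrank_ker_inf U.1.mkQ W
      rw [ker_mkQ, inf_eq_left.2 U.2.1, U.2.2] at h
      omega
    have h := pow_le_card_finrank_eq_disjoint (W.map U.1.mkQ) (D := d - j) (by omega)
    rwa [hrank, show finrank K E - j - (d - j) = finrank K E - d by omega] at h
  let inc : (Σ U : A, B U) →
      {V : Submodule K E // finrank K V = d ∧ j ≤ finrank K ↥(V ⊓ W)} := fun ⟨U, X⟩ ↦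
    ⟨X.1.comap U.1.mkQ, by rw [finrank_comap_mkQ, X.2.1, U.2.2]; omega,
      by rw [comap_mkQ_inf_eq_of_disjoint U.2.1 X.2.2, U.2.2]⟩
  have inc_injective : Function.Injective inc := by
    rintro ⟨U, X⟩ ⟨U', X'⟩ h
    have hcomap : X.1.comap U.1.mkQ = X'.1.comap U'.1.mkQ := congrArg Subtype.val h
    obtain rfl : U = U' := Subtype.ext <| by
      rw [← comap_mkQ_inf_eq_of_disjoint U.2.1 X.2.2, hcomap,
        comap_mkQ_inf_eq_of_disjoint U'.2.1 X'.2.2]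
    obtain rfl : X = X' := Subtype.ext (comap_injective_of_surjective U.1.mkQ_surjective hcomap)
    rfl
  calc _ = q ^ (j * (finrank K W - j)) * q ^ ((d - j) * (finrank K E - d)) := pow_add _ _ _
    _ ≤ 2 ^ j * Nat.card A * q ^ ((d - j) * (finrank K E - d)) := Nat.mul_le_mul_right _ hA
    _ ≤ 2 ^ j * (2 ^ (d - j) * Nat.card (Σ U : A, B U)) := by
        rw [mul_assoc]; exact Nat.mul_le_mul_left _ (card_mul_le_mul_card_sigma hfiber)
    _ ≤ _ := by
        rw [← mul_assoc, pow_mul_pow_sub 2 hjd]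
        exact Nat.mul_le_mul_left _ (Nat.card_le_card_of_injective inc inc_injective)

end FiniteField

theorem stmt_2_general (n k m l : ℕ) (hkn : k ≤ n)
    (hnk : m - l ≤ n - k) (hlk : l ≤ k) (hlm : l ≤ m) :
    ∃ c C : ℝ, 0 < c ∧ 0 < C ∧ ∀ p : ℕ, p.Prime →
      ∀ W : Submodule (ZMod p) (Fin n → ZMod p), Module.finrank (ZMod p) W = m →
      (c * (p : ℝ) ^ ((k * (n - k) : ℤ) - ((k : ℤ) - l) * ((m : ℤ) - l)) ≤
        Nat.card {V : Submodule (ZMod p) (Fin n → ZMod p) //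
          Module.finrank (ZMod p) V = n - k ∧
          Nat.card (V.mkQ '' (W : Set (Fin n → ZMod p))) ≤ p ^ l}) ∧
      ((Nat.card {V : Submodule (ZMod p) (Fin n → ZMod p) //
          Module.finrank (ZMod p) V = n - k ∧
          Nat.card (V.mkQ '' (W : Set (Fin n → ZMod p))) ≤ p ^ l} : ℝ)
        ≤ C * (p : ℝ) ^ ((k * (n - k) : ℤ) - ((k : ℤ) - l) * ((m : ℤ) - l))) := by
  refine ⟨(2 ^ (n - k))⁻¹, 2 ^ (n - k), by positivity, by positivity, fun p hp W hW ↦ ?_⟩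
  have : Fact p.Prime := ⟨hp⟩
  have hq : Fintype.card (ZMod p) = p := ZMod.card p
  have hE : finrank (ZMod p) (Fin n → ZMod p) = n := finrank_fin_fun _
  have hcard : Nat.card {V : Submodule (ZMod p) (Fin n → ZMod p) // finrank (ZMod p) V = n - k ∧
        Nat.card (V.mkQ '' (W : Set (Fin n → ZMod p))) ≤ p ^ l} =
      Nat.card {V : Submodule (ZMod p) (Fin n → ZMod p) // finrank (ZMod p) V = n - k ∧
        m - l ≤ finrank (ZMod p) ↥(V ⊓ W)} := by
    refine Nat.card_congr (Equiv.subtypeEquivRight fun V ↦ and_congr_right fun _ ↦ ?_)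
    rw [natCard_image_mkQ, hq, hW, Nat.pow_le_pow_iff_right hp.one_lt]
    omega
  have hexp : (k * (n - k) : ℤ) - ((k : ℤ) - l) * ((m : ℤ) - l) =
      ((m - l) * l + (n - k - (m - l)) * k : ℕ) := by
    push_cast [Nat.cast_sub hlm, Nat.cast_sub hkn, Nat.cast_sub hnk]
    ring
  have hupper := card_finrank_eq_le_finrank_inf_le W (d := n - k) (j := m - l) (by omega) hnk
    (by omega)
  have hlower := pow_le_card_finrank_eq_le_finrank_inf W (d := n - k) (j := m - l) (by omega) hnk
    (by omega)
  rw [hE, hW, hq, Nat.sub_sub_self hlm, Nat.sub_sub_self hkn] at hupper hlower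
  rw [hcard, hexp, zpow_natCast]
  constructor
  · rw [inv_mul_le_iff₀ (by positivity)]
    exact_mod_cast hlower
  · exact_mod_cast hupper

/-- For `0 ≤ l ≤ n`, `1 ≤ k, m ≤ n` with `n - k ≥ m - l` and `l ≤ min k m`,
and any `m`-dimensional linear subspace `W` of `F_p^n`, the number of `(n-k)`-dimensional
linear subspaces `V` with `#(π*_V(W)) ≤ p^l` is comparable to `p^(k(n-k) - (k-l)(m-l))`,
with constants depending only on `n, k, m, l`. Here `π*_V(W)` is the image of `W` in the
quotient `F_p^n / V`, i.e. the set of cosets `x + V`, `x ∈ W`. -/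
theorem stmt_2 (n k m l : ℕ) (hl : l ≤ n) (hk1 : 1 ≤ k) (hkn : k ≤ n)
    (hm1 : 1 ≤ m) (hmn : m ≤ n) (hnk : m - l ≤ n - k) (hlk : l ≤ k) (hlm : l ≤ m) :
    ∃ c C : ℝ, 0 < c ∧ 0 < C ∧ ∀ p : ℕ, p.Prime →
      ∀ W : Submodule (ZMod p) (Fin n → ZMod p), Module.finrank (ZMod p) W = m →
      (c * (p : ℝ) ^ ((k * (n - k) : ℤ) - ((k : ℤ) - l) * ((m : ℤ) - l)) ≤
        Nat.card {V : Submodule (ZMod p) (Fin n → ZMod p) //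
          Module.finrank (ZMod p) V = n - k ∧
          Nat.card (V.mkQ '' (W : Set (Fin n → ZMod p))) ≤ p ^ l}) ∧
      ((Nat.card {V : Submodule (ZMod p) (Fin n → ZMod p) //
          Module.finrank (ZMod p) V = n - k ∧
          Nat.card (V.mkQ '' (W : Set (Fin n → ZMod p))) ≤ p ^ l} : ℝ)
        ≤ C * (p : ℝ) ^ ((k * (n - k) : ℤ) - ((k : ℤ) - l) * ((m : ℤ) - l))) :=
  stmt_2_general n k m l hkn hnk hlk hlm
end

section
/- Let a ∈ (0,2] and s ∈ (a/2, min{1,a}]. Then for all sufficiently large primes p there exists a set A ⊆ F_p^2 with #A ≥ c·p^a such that the exceptional set E_s(A;2,1) has cardinality at least c·p^{2s−a}, where c > 0 is an absolute constant. Concretely, A = {(x,y) ∈ F_p^2 : |x| ≤ (1/5)p^{a−s}, |y| ≤ (1/5)p^s} works, with E_s(A;2,1) containing all lines through the origin of slope k with |k| ≤ (1/5)p^{2s−a}. -/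
section Aux

lemma aux_valMinAbs_intCast {p : ℕ} [NeZero p] {m : ℤ} (h1 : -(p:ℤ) < m*2) (h2 : m*2 ≤ p) :
    ((m : ZMod p)).valMinAbs = m :=
  (ZMod.valMinAbs_spec _ _).2 ⟨rfl, h1, h2⟩

lemma aux_ball_card (p m : ℕ) [NeZero p] (h : 2*m < p) :
    Nat.card {z : ZMod p | z.valMinAbs.natAbs ≤ m} = 2*m+1 := by
  have himg : {z : ZMod p | z.valMinAbs.natAbs ≤ m}
      = (fun i : ℤ => (i : ZMod p)) '' (Set.Icc (-(m:ℤ)) m) := by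
    ext z
    constructor
    · intro hz
      simp only [Set.mem_setOf_eq] at hz
      exact ⟨z.valMinAbs, by simp only [Set.mem_Icc]; omega, z.coe_valMinAbs⟩
    · rintro ⟨i, hi, rfl⟩
      simp only [Set.mem_Icc] at hi
      have := aux_valMinAbs_intCast (p := p) (m := i) (by omega) (by omega)
      simp only [Set.mem_setOf_eq, this]
      omega
  have hinj : Set.InjOn (fun i : ℤ => (i : ZMod p)) (Set.Icc (-(m:ℤ)) m) := by
    intro i hi j hj hij
    simp only [Set.mem_Icc] at hi hj
    have h1 := aux_valMinAbs_intCast (p := p) (m := i) (by omega) (by omega)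
    have h2 := aux_valMinAbs_intCast (p := p) (m := j) (by omega) (by omega)
    have hij' : ((i : ZMod p)).valMinAbs = ((j : ZMod p)).valMinAbs := congrArg _ hij
    rw [h1, h2] at hij'
    exact hij'
  rw [Nat.card_coe_set_eq, himg, Set.ncard_image_of_injOn hinj,
    ← Finset.coe_Icc, Set.ncard_coe_finset, Int.card_Icc]
  omega

lemma aux_grid_card {p : ℕ} (S T : Set (ZMod p)) :
    Nat.card {v : Fin 2 → ZMod p | v 0 ∈ S ∧ v 1 ∈ T} = Nat.card S * Nat.card T := by
  rw [← Nat.card_prod]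
  exact Nat.card_congr
    { toFun := fun v => (⟨v.1 0, v.2.1⟩, ⟨v.1 1, v.2.2⟩)
      invFun := fun z => ⟨![z.1, z.2], by simp⟩
      left_inv := fun v => Subtype.ext (funext fun i => by fin_cases i <;> simp)
      right_inv := fun z => by simp }

variable {p : ℕ} [Fact (Nat.Prime p)]

noncomputable def auxF (k : ZMod p) : (Fin 2 → ZMod p) →ₗ[ZMod p] ZMod p :=
  LinearMap.proj 1 - k • LinearMap.proj 0

lemma auxF_apply (k : ZMod p) (w : Fin 2 → ZMod p) : auxF k w = w 1 - k * w 0 := rfl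

lemma aux_vec_ne_zero (k : ZMod p) : (![1, k] : Fin 2 → ZMod p) ≠ 0 := by
  intro h
  have := congrFun h 0
  simp at this

lemma aux_ker_eq (k : ZMod p) :
    LinearMap.ker (auxF k) = Submodule.span (ZMod p) {![1, k]} := by
  symm
  have hle : Submodule.span (ZMod p) {![1, k]} ≤ LinearMap.ker (auxF k) := by
    rw [Submodule.span_le, Set.singleton_subset_iff]
    simp [LinearMap.mem_ker, auxF_apply]
  refine Submodule.eq_of_le_of_finrank_eq hle ?_
  rw [finrank_span_singleton (aux_vec_ne_zero k)]
  have hsurj : LinearMap.range (auxF k) = ⊤ := by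
    rw [LinearMap.range_eq_top]
    intro c
    exact ⟨![0, c], by simp [auxF_apply]⟩
  have h2 : Module.finrank (ZMod p) (Fin 2 → ZMod p) = 2 := by simp
  have := LinearMap.finrank_range_add_finrank_ker (auxF k)
  rw [hsurj, h2] at this
  simp only [finrank_top, Module.finrank_self] at this
  exact (Nat.add_left_cancel this).symm

lemma aux_quot_card (k : ZMod p) (A : Set (Fin 2 → ZMod p)) :
    Nat.card ((Submodule.span (ZMod p) {![1, k]}).mkQ '' A)
      = Nat.card ((auxF k) '' A) := by
  set ℓ := Submodule.span (ZMod p) {![1, k]} with hℓ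
  have hker : ℓ ≤ LinearMap.ker (auxF k) := (aux_ker_eq k).ge
  set g := ℓ.liftQ (auxF k) hker with hg
  have ginj : Function.Injective g := by
    rw [← LinearMap.ker_eq_bot]
    exact Submodule.ker_liftQ_eq_bot ℓ (auxF k) hker (aux_ker_eq k).le
  calc Nat.card (ℓ.mkQ '' A) = Nat.card (g '' (ℓ.mkQ '' A)) :=
        (Nat.card_image_of_injective ginj _).symm
    _ = Nat.card ((auxF k) '' A) := by
        rw [Set.image_image]
        rfl

lemma aux_span_inj : Function.Injective
    (fun k : ZMod p => Submodule.span (ZMod p) {![1, k]}) := by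
  intro k k' h
  have hmem : (![1, k'] : Fin 2 → ZMod p) ∈ Submodule.span (ZMod p) {![1, k]} := by
    rw [show Submodule.span (ZMod p) {![1, k]} = Submodule.span (ZMod p) {![1, k']} from h]
    exact Submodule.mem_span_singleton_self _
  rw [Submodule.mem_span_singleton] at hmem
  obtain ⟨c, hc⟩ := hmem
  have h0 := congrFun hc 0
  have h1 := congrFun hc 1
  simp at h0 h1
  rw [h0] at h1
  simpa using h1

lemma aux_two_floor (t : ℝ) : 0 ≤ t → t ≤ 2 * (⌊t⌋₊ : ℝ) + 1 := by
  intro ht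
  rcases le_or_gt t 1 with h | h
  · have : (0:ℝ) ≤ (⌊t⌋₊ : ℝ) := by positivity
    linarith
  · have := Nat.sub_one_lt_floor t
    linarith

end Aux



/-- Let `a ∈ (0,2]`, `s ∈ (a/2, min 1 a]`. For all sufficiently large primes
`p` there is `A ⊆ F_p^2` with `#A ≥ c·p^a` whose exceptional set
`E_s(A;2,1) = {ℓ ∈ G(1,F_p^2) : #π*_ℓ(A) < p^s}` has cardinality at least `c·p^(2s-a)`,
where `c > 0` is an absolute constant. -/
theorem stmt_4 :
    ∃ c : ℝ, 0 < c ∧ ∀ a s : ℝ, 0 < a → a ≤ 2 → a / 2 < s → s ≤ min 1 a →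
      ∃ p₀ : ℕ, ∀ p : ℕ, p.Prime → p₀ ≤ p →
        ∃ A : Set (Fin 2 → ZMod p),
          c * (p : ℝ) ^ a ≤ Nat.card A ∧
          c * (p : ℝ) ^ (2 * s - a) ≤
            Nat.card {ℓ : Submodule (ZMod p) (Fin 2 → ZMod p) //
              Module.finrank (ZMod p) ℓ = 1 ∧
              (Nat.card (ℓ.mkQ '' A) : ℝ) < (p : ℝ) ^ s} := by
  refine ⟨1/25, by norm_num, fun a s ha ha2 has hsmin => ?_⟩
  have hs1 : s ≤ 1 := le_trans hsmin (min_le_left _ _)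
  have hsa : s ≤ a := le_trans hsmin (min_le_right _ _)
  have hs0 : 0 < s := lt_of_le_of_lt (by linarith) has
  have has0 : 0 ≤ a - s := by linarith
  have has1 : a - s ≤ 1 := by linarith
  have h2sa0 : 0 < 2*s - a := by linarith
  have h2sas : 2*s - a ≤ s := by linarith
  refine ⟨max 2 ⌈(2:ℝ)^(1/s)⌉₊, fun p hp hple => ?_⟩
  haveI : Fact p.Prime := ⟨hp⟩
  haveI : NeZero p := NeZero.of_pos hp.pos
  -- basic real facts about p
  have hp1 : (1:ℝ) ≤ p := by exact_mod_cast hp.one_lt.le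
  have hp0 : (0:ℝ) < p := by positivity
  have hps2 : (2:ℝ) ≤ (p:ℝ)^s := by
    have h2 : ((2:ℝ)^(1/s) : ℝ) ≤ p := by
      calc ((2:ℝ)^(1/s)) ≤ (⌈(2:ℝ)^(1/s)⌉₊ : ℝ) := Nat.le_ceil _
      _ ≤ p := by exact_mod_cast le_trans (le_max_right _ _) hple
    calc (2:ℝ) = ((2:ℝ)^(1/s))^s := by
          rw [← Real.rpow_mul (by norm_num), one_div_mul_cancel hs0.ne', Real.rpow_one]
      _ ≤ (p:ℝ)^s := Real.rpow_le_rpow (by positivity) h2 hs0.le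
  have hmono : ∀ u v : ℝ, u ≤ v → (p:ℝ)^u ≤ (p:ℝ)^v :=
    fun u v huv => Real.rpow_le_rpow_of_exponent_le hp1 huv
  have hppow : ∀ u : ℝ, u ≤ 1 → (p:ℝ)^u ≤ p := by
    intro u hu
    simpa [Real.rpow_one] using hmono u 1 hu
  -- parameters
  set X := ⌊(p:ℝ)^(a-s)/5⌋₊ with hXdef
  set Y := ⌊(p:ℝ)^s/5⌋₊ with hYdef
  set K := ⌊(p:ℝ)^(2*s-a)/5⌋₊ with hKdef
  have hXle : (X:ℝ) ≤ (p:ℝ)^(a-s)/5 := Nat.floor_le (by positivity)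
  have hYle : (Y:ℝ) ≤ (p:ℝ)^s/5 := Nat.floor_le (by positivity)
  have hKle : (K:ℝ) ≤ (p:ℝ)^(2*s-a)/5 := Nat.floor_le (by positivity)
  have hXge : (p:ℝ)^(a-s)/5 ≤ 2*(X:ℝ)+1 := aux_two_floor _ (by positivity)
  have hYge : (p:ℝ)^s/5 ≤ 2*(Y:ℝ)+1 := aux_two_floor _ (by positivity)
  have hKge : (p:ℝ)^(2*s-a)/5 ≤ 2*(K:ℝ)+1 := aux_two_floor _ (by positivity)
  have hXp : 2*X < p := by
    have : 2*(X:ℝ) < p := by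
      have := hppow (a-s) has1
      nlinarith
    exact_mod_cast this
  have hYp : 2*Y < p := by
    have : 2*(Y:ℝ) < p := by
      have := hppow s hs1
      nlinarith
    exact_mod_cast this
  -- the key product bound
  have hpow_mul : (p:ℝ)^(2*s-a) * (p:ℝ)^(a-s) = (p:ℝ)^s := by
    rw [← Real.rpow_add hp0]; ring_nf
  have hpow_mul2 : (p:ℝ)^(a-s) * (p:ℝ)^s = (p:ℝ)^a := by
    rw [← Real.rpow_add hp0]; ring_nf
  set M := Y + K*X with hMdef
  have hMle : (M:ℝ) ≤ 6/25 * (p:ℝ)^s := by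
    have hKX : (K:ℝ)*(X:ℝ) ≤ (p:ℝ)^s/25 := by
      calc (K:ℝ)*(X:ℝ) ≤ ((p:ℝ)^(2*s-a)/5) * ((p:ℝ)^(a-s)/5) := by
            apply mul_le_mul hKle hXle (by positivity) (by positivity)
        _ = (p:ℝ)^s/25 := by rw [div_mul_div_comm, hpow_mul]; norm_num
    push_cast [hMdef]
    linarith
  have hMp : 2*M < p := by
    have hr : 2*(M:ℝ) < p := by
      have h1 := hppow s hs1
      linarith
    exact_mod_cast hr
  have hMs : (2*(M:ℝ)+1) < (p:ℝ)^s := by linarith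
  -- the set A
  set SX := {z : ZMod p | z.valMinAbs.natAbs ≤ X} with hSX
  set SY := {z : ZMod p | z.valMinAbs.natAbs ≤ Y} with hSY
  refine ⟨{v : Fin 2 → ZMod p | v 0 ∈ SX ∧ v 1 ∈ SY}, ?_, ?_⟩
  · -- cardinality of A
    rw [aux_grid_card SX SY, hSX, hSY, aux_ball_card p X hXp, aux_ball_card p Y hYp]
    have : (p:ℝ)^a/25 ≤ (2*(X:ℝ)+1) * (2*(Y:ℝ)+1) := by
      calc (p:ℝ)^a/25 = ((p:ℝ)^(a-s)/5) * ((p:ℝ)^s/5) := by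
            rw [div_mul_div_comm, hpow_mul2]; norm_num
        _ ≤ (2*(X:ℝ)+1) * (2*(Y:ℝ)+1) :=
            mul_le_mul hXge hYge (by positivity) (by positivity)
    calc 1/25 * (p:ℝ)^a = (p:ℝ)^a/25 := by ring
      _ ≤ (2*(X:ℝ)+1) * (2*(Y:ℝ)+1) := this
      _ = (((2*X+1) * (2*Y+1) : ℕ) : ℝ) := by push_cast; ring
  · -- cardinality of the exceptional set
    set A := {v : Fin 2 → ZMod p | v 0 ∈ SX ∧ v 1 ∈ SY} with hA
    -- each span {![1,k]} with |k| ≤ K is exceptional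
    have hexc : ∀ k : ZMod p, k.valMinAbs.natAbs ≤ K →
        Module.finrank (ZMod p) (Submodule.span (ZMod p) {![1, k]}) = 1 ∧
        (Nat.card ((Submodule.span (ZMod p) {![1, k]}).mkQ '' A) : ℝ) < (p:ℝ)^s := by
      intro k hk
      refine ⟨finrank_span_singleton (aux_vec_ne_zero k), ?_⟩
      rw [aux_quot_card k A]
      have hsub : (auxF k) '' A ⊆ {z : ZMod p | z.valMinAbs.natAbs ≤ M} := by
        rintro z ⟨v, hv, rfl⟩
        obtain ⟨hv0, hv1⟩ := hv
        simp only [hSX, Set.mem_setOf_eq] at hv0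
        simp only [hSY, Set.mem_setOf_eq] at hv1
        set x := v 0
        set y := v 1
        have heq : auxF k v = (((y.valMinAbs - k.valMinAbs * x.valMinAbs : ℤ)) : ZMod p) := by
          rw [auxF_apply]
          push_cast [ZMod.coe_valMinAbs]
          rfl
        have habs : (y.valMinAbs - k.valMinAbs * x.valMinAbs).natAbs ≤ M := by
          have h1 := Int.natAbs_sub_le y.valMinAbs (k.valMinAbs * x.valMinAbs)
          have h2 : (k.valMinAbs * x.valMinAbs).natAbs = k.valMinAbs.natAbs * x.valMinAbs.natAbs :=
            Int.natAbs_mul _ _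
          have h3 : k.valMinAbs.natAbs * x.valMinAbs.natAbs ≤ K * X :=
            Nat.mul_le_mul hk hv0
          simp only [hMdef]
          omega
        have hvma : ((((y.valMinAbs - k.valMinAbs * x.valMinAbs : ℤ)) : ZMod p)).valMinAbs
            = y.valMinAbs - k.valMinAbs * x.valMinAbs := by
          apply aux_valMinAbs_intCast <;> omega
        simp only [Set.mem_setOf_eq, heq, hvma]
        exact habs
      have hfin : ({z : ZMod p | z.valMinAbs.natAbs ≤ M}).Finite := Set.toFinite _
      have := Nat.card_mono hfin hsub
      rw [aux_ball_card p M hMp] at this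
      calc (Nat.card ((auxF k) '' A) : ℝ) ≤ ((2*M+1 : ℕ):ℝ) := by exact_mod_cast this
        _ = 2*(M:ℝ)+1 := by push_cast; ring
        _ < (p:ℝ)^s := hMs
    -- injection from the K-ball into the exceptional set
    set T := {ℓ : Submodule (ZMod p) (Fin 2 → ZMod p) //
              Module.finrank (ZMod p) ℓ = 1 ∧
              (Nat.card (ℓ.mkQ '' A) : ℝ) < (p : ℝ) ^ s} with hT
    have hinj : Function.Injective
        (fun k : {z : ZMod p // z.valMinAbs.natAbs ≤ K} =>
          (⟨Submodule.span (ZMod p) {![1, k.1]}, hexc k.1 k.2⟩ : T)) := by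
      intro k k' h
      have : Submodule.span (ZMod p) {![1, k.1]} = Submodule.span (ZMod p) {![1, k'.1]} :=
        congrArg Subtype.val h
      exact Subtype.ext (aux_span_inj this)
    have hcard := Nat.card_le_card_of_injective _ hinj
    have hKball : Nat.card {z : ZMod p // z.valMinAbs.natAbs ≤ K} = 2*K+1 := by
      have hKp : 2*K < p := by
        have : 2*(K:ℝ) < p := by
          have h1 := hppow s hs1
          have h2 := hmono (2*s-a) s h2sas
          linarith
        exact_mod_cast this
      exact aux_ball_card p K hKp
    rw [hKball] at hcard
    calc 1/25 * (p:ℝ)^(2*s-a) ≤ (p:ℝ)^(2*s-a)/5 := by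
          have : 0 ≤ (p:ℝ)^(2*s-a) := by positivity
          linarith
      _ ≤ 2*(K:ℝ)+1 := hKge
      _ = ((2*K+1 : ℕ) : ℝ) := by push_cast; ring
      _ ≤ Nat.card T := by exact_mod_cast hcard
end

section
/- For every s ∈ (0,1], t ∈ [0,2], and every prime p, there exists a set of lines L in F_p^2 with #L ≥ (1/2)p^t and for each L ∈ L a subset Y(L) ⊆ L with #Y(L) ≥ (1/2)p^s, such that the union E = ⋃_{L∈L} Y(L) satisfies #E ≤ C·p^{min{s+t, (3/2)s+(1/2)t, s+1}} for a constant C independent of p. -/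
/-!
Take the lines `y = m x + c` with slope `m < M` and intercept `c < C` (as residues mod `p`),
and on each line keep the points with `x < X`. All these points lie in the box
`[0, X) × [0, B)` with `B = min(p, (M - 1)(X - 1) + C)`, so the union has at most `X · B`
points. Choosing `X ≈ p^s` and `M C ≈ p^t` with `(M, C) ≈ (1, p^t)` when `t ≤ s`,
`(p^((t-s)/2), p^((s+t)/2))` when `s ≤ t ≤ 2 - s`, and `(p^(t-1), p)` when `t ≥ 2 - s` gives
the three exponents of the bound.
-/

open Finset Pointwise

def LineConfiguration (K : Type*) [Field K] (nL nY nE : ℝ) : Prop :=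
  ∃ (𝓛 : Set (AffineSubspace K (Fin 2 → K)))
    (Y : AffineSubspace K (Fin 2 → K) → Set (Fin 2 → K)),
    (∀ L ∈ 𝓛, (L : Set (Fin 2 → K)).Nonempty ∧ Module.finrank K L.direction = 1) ∧
    nL ≤ Nat.card 𝓛 ∧
    (∀ L ∈ 𝓛, Y L ⊆ (L : Set (Fin 2 → K)) ∧ nY ≤ Nat.card (Y L)) ∧
    (Nat.card (⋃ L ∈ 𝓛, Y L) : ℝ) ≤ nE

section Field

variable {K : Type*} [Field K]

theorem LineConfiguration.mono {nL nY nE nL' nY' nE' : ℝ} (h : LineConfiguration K nL nY nE)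
    (hL : nL' ≤ nL) (hY : nY' ≤ nY) (hE : nE ≤ nE') : LineConfiguration K nL' nY' nE' := by
  obtain ⟨𝓛, Y, hlines, hcard, hYL, hunion⟩ := h
  exact ⟨𝓛, Y, hlines, hL.trans hcard,
    fun L hL => ⟨(hYL L hL).1, hY.trans (hYL L hL).2⟩, hunion.trans hE⟩

def slopeLine (m c : K) : AffineSubspace K (Fin 2 → K) :=
  AffineSubspace.mk' ![0, c] (K ∙ ![1, m])

theorem mem_slopeLine {m c : K} {z : Fin 2 → K} : z ∈ slopeLine m c ↔ z 1 = m * z 0 + c := by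
  rw [slopeLine, AffineSubspace.mem_mk', Submodule.mem_span_singleton]
  constructor
  · rintro ⟨a, ha⟩
    have h0 := congrFun ha 0
    have h1 := congrFun ha 1
    simp only [Pi.smul_apply, vsub_eq_sub, Pi.sub_apply, Matrix.cons_val_zero,
      Matrix.cons_val_one, smul_eq_mul, mul_one, sub_zero] at h0 h1
    rw [← h0]
    linear_combination -h1
  · intro h
    refine ⟨z 0, funext fun i => ?_⟩
    fin_cases i <;> simp [h, mul_comm]

theorem finrank_direction_slopeLine (m c : K) :
    Module.finrank K (slopeLine m c).direction = 1 := by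
  rw [slopeLine, AffineSubspace.direction_mk']
  refine finrank_span_singleton fun h => ?_
  simpa using congrFun h 0

theorem slopeLine_injective : Function.Injective fun q : K × K => slopeLine q.1 q.2 := by
  rintro ⟨m, c⟩ ⟨m', c'⟩ (h : slopeLine m c = slopeLine m' c')
  have h0 : (![0, c] : Fin 2 → K) ∈ slopeLine m' c' := h ▸ mem_slopeLine.2 (by simp)
  have h1 : (![1, m + c] : Fin 2 → K) ∈ slopeLine m' c' := h ▸ mem_slopeLine.2 (by simp)
  simp only [mem_slopeLine, Matrix.cons_val_zero, Matrix.cons_val_one, mul_zero, zero_add,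
    mul_one] at h0 h1
  subst h0
  simpa using h1

theorem lineConfiguration_of_finset [DecidableEq K] (A C X : Finset K) :
    LineConfiguration K (#A * #C : ℕ) #X (#X * #(A * X + C) : ℕ) := by
  set box : Set (Fin 2 → K) :=
    (fun q : K × K => ![q.1, q.2]) '' ((X : Set K) ×ˢ ((A * X + C : Finset K) : Set K))
  have box_finite : box.Finite := (Set.toFinite _).image _
  have pair_injective : Function.Injective fun q : K × K => (![q.1, q.2] : Fin 2 → K) :=
    (piFinTwoEquiv fun _ => K).symm.injective
  have card_box : Nat.card box = #X * #(A * X + C) := by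
    rw [Nat.card_image_of_injective pair_injective, ← coe_product,
      Nat.card_coe_set_eq, Set.ncard_coe_finset, card_product]
  refine ⟨(fun q : K × K => slopeLine q.1 q.2) '' ((A ×ˢ C : Finset (K × K)) : Set (K × K)),
    fun L => L ∩ box, ?_, ?_, ?_, ?_⟩
  · rintro _ ⟨q, -, rfl⟩
    exact ⟨⟨_, AffineSubspace.self_mem_mk' _ _⟩, finrank_direction_slopeLine _ _⟩
  · rw [Nat.card_image_of_injective slopeLine_injective, Nat.card_coe_set_eq,
      Set.ncard_coe_finset, card_product]
  · rintro _ ⟨⟨m, c⟩, hmc, rfl⟩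
    rw [coe_product, Set.mem_prod] at hmc
    refine ⟨Set.inter_subset_left, ?_⟩
    have graph_subset : (fun x => ![x, m * x + c]) '' (X : Set K) ⊆ slopeLine m c ∩ box := by
      rintro _ ⟨x, hx, rfl⟩
      exact ⟨mem_slopeLine.2 (by simp),
        ⟨(x, m * x + c), ⟨hx, add_mem_add (mul_mem_mul hmc.1 hx) hmc.2⟩, rfl⟩⟩
    have graph_injective : Function.Injective fun x : K => ![x, m * x + c] :=
      fun x y h => by simpa using congrFun h 0
    calc (#X : ℝ) = Nat.card ((fun x => ![x, m * x + c]) '' (X : Set K)) := by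
          rw [Nat.card_image_of_injective graph_injective, Nat.card_coe_set_eq,
            Set.ncard_coe_finset]
      _ ≤ Nat.card ↥(↑(slopeLine m c) ∩ box) := by
          exact_mod_cast Nat.card_mono (box_finite.subset Set.inter_subset_right) graph_subset
  · rw [← card_box]
    exact_mod_cast
      Nat.card_mono box_finite (Set.iUnion₂_subset fun _ _ => Set.inter_subset_right)

end Field

section ZMod

variable {p : ℕ}

def castRange (p n : ℕ) : Finset (ZMod p) := (range n).image Nat.cast

theorem card_castRange {n : ℕ} (hn : n ≤ p) : #(castRange p n) = n := by
  rw [castRange, card_image_of_injOn, card_range]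
  intro a ha b hb hab
  rw [← ZMod.val_cast_of_lt ((mem_range.1 ha).trans_le hn),
    ← ZMod.val_cast_of_lt ((mem_range.1 hb).trans_le hn)]
  exact congrArg ZMod.val hab

theorem castRange_mul_add_subset (M X C : ℕ) :
    castRange p M * castRange p X + castRange p C ⊆ castRange p ((M - 1) * (X - 1) + C) := by
  simp only [castRange, subset_iff, mem_add, mem_mul, mem_image, mem_range]
  rintro _ ⟨_, ⟨_, ⟨m, hm, rfl⟩, _, ⟨x, hx, rfl⟩, rfl⟩, _, ⟨c, hc, rfl⟩, rfl⟩
  have : m * x ≤ (M - 1) * (X - 1) := Nat.mul_le_mul (by omega) (by omega)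
  exact ⟨m * x + c, by omega, by push_cast; rfl⟩

variable [Fact p.Prime]

theorem lineConfiguration_castRange {M C X : ℕ} (hM : M ≤ p) (hC : C ≤ p) (hX : X ≤ p) :
    LineConfiguration (ZMod p) (M * C : ℕ) X (X * min p ((M - 1) * (X - 1) + C) : ℕ) := by
  classical
  have card_sumset : #(castRange p M * castRange p X + castRange p C) ≤
      min p ((M - 1) * (X - 1) + C) :=
    le_min ((card_le_univ _).trans (ZMod.card p).le)
      ((card_le_card (castRange_mul_add_subset M X C)).trans
        (card_image_le.trans (card_range _).le))
  refine (lineConfiguration_of_finset (castRange p M) (castRange p C) (castRange p X)).mono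
    ?_ ?_ ?_ <;>
    simp only [card_castRange hM, card_castRange hC, card_castRange hX, le_refl, Nat.cast_le]
  exact Nat.mul_le_mul_left X card_sumset

end ZMod

section Rpow

variable {p : ℕ}

theorem natCeil_rpow_le (hp : 1 ≤ (p : ℝ)) {x : ℝ} (hx : x ≤ 1) : ⌈(p : ℝ) ^ x⌉₊ ≤ p :=
  Nat.ceil_le.2 (by simpa using Real.rpow_le_rpow_of_exponent_le hp hx)

theorem natCeil_rpow_le_two_mul (hp : 1 ≤ (p : ℝ)) {x : ℝ} (hx : 0 ≤ x) :
    (⌈(p : ℝ) ^ x⌉₊ : ℝ) ≤ 2 * (p : ℝ) ^ x :=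
  Nat.ceil_le_two_mul (by linarith [Real.one_le_rpow hp hx])

theorem natCeil_sub_one_le {y : ℝ} (hy : 0 ≤ y) : ((⌈y⌉₊ - 1 : ℕ) : ℝ) ≤ y :=
  calc ((⌈y⌉₊ - 1 : ℕ) : ℝ) ≤ ⌊y⌋₊ := by
        exact_mod_cast Nat.sub_le_of_le_add (Nat.ceil_le_floor_add_one y)
    _ ≤ y := Nat.floor_le hy

variable [Fact p.Prime] {s t : ℝ}

theorem lineConfiguration_parallel (hs0 : 0 ≤ s) (hs1 : s ≤ 1) (ht0 : 0 ≤ t) (ht1 : t ≤ 1) :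
    LineConfiguration (ZMod p) ((p : ℝ) ^ t) ((p : ℝ) ^ s) (4 * (p : ℝ) ^ (s + t)) := by
  have hp : (1 : ℝ) ≤ p := by exact_mod_cast (Fact.out : p.Prime).one_lt.le
  refine (lineConfiguration_castRange (M := 1) (Fact.out : p.Prime).one_lt.le
    (natCeil_rpow_le hp ht1) (natCeil_rpow_le hp hs1)).mono (by simpa using Nat.le_ceil _)
    (Nat.le_ceil _) ?_
  calc (((⌈(p : ℝ) ^ s⌉₊ * min p ((1 - 1) * (⌈(p : ℝ) ^ s⌉₊ - 1) + ⌈(p : ℝ) ^ t⌉₊)) : ℕ)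
        : ℝ)
      ≤ (⌈(p : ℝ) ^ s⌉₊ : ℝ) * ⌈(p : ℝ) ^ t⌉₊ := by
        exact_mod_cast Nat.mul_le_mul_left _ (by simp)
    _ ≤ (2 * (p : ℝ) ^ s) * (2 * (p : ℝ) ^ t) := by
        gcongr
        exacts [natCeil_rpow_le_two_mul hp hs0, natCeil_rpow_le_two_mul hp ht0]
    _ = 4 * (p : ℝ) ^ (s + t) := by rw [Real.rpow_add (by linarith)]; ring

theorem lineConfiguration_balanced (hs0 : 0 ≤ s) (hst : s ≤ t) (hst2 : s + t ≤ 2) :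
    LineConfiguration (ZMod p) ((p : ℝ) ^ t) ((p : ℝ) ^ s)
      (6 * (p : ℝ) ^ (3 / 2 * s + 1 / 2 * t)) := by
  have hp : (1 : ℝ) ≤ p := by exact_mod_cast (Fact.out : p.Prime).one_lt.le
  have hp0 : (0 : ℝ) < p := by linarith
  set μ := (t - s) / 2 with hμ
  set γ := (s + t) / 2 with hγ
  have hμγ : (p : ℝ) ^ μ * (p : ℝ) ^ γ = (p : ℝ) ^ t := by
    rw [← Real.rpow_add hp0]; congr 1; linarith
  have hμs : (p : ℝ) ^ μ * (p : ℝ) ^ s = (p : ℝ) ^ γ := by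
    rw [← Real.rpow_add hp0]; congr 1; linarith
  have hμ0 : 0 ≤ μ := by linarith
  have hγ0 : 0 ≤ γ := by linarith
  refine (lineConfiguration_castRange (natCeil_rpow_le hp (by linarith : μ ≤ 1))
    (natCeil_rpow_le hp (by linarith : γ ≤ 1)) (natCeil_rpow_le hp (by linarith : s ≤ 1))).mono
    ?_ (Nat.le_ceil _) ?_
  · rw [← hμγ, Nat.cast_mul]
    gcongr <;> exact Nat.le_ceil _
  calc (((⌈(p : ℝ) ^ s⌉₊ * min p ((⌈(p : ℝ) ^ μ⌉₊ - 1) * (⌈(p : ℝ) ^ s⌉₊ - 1) +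
        ⌈(p : ℝ) ^ γ⌉₊)) : ℕ) : ℝ)
      ≤ (⌈(p : ℝ) ^ s⌉₊ : ℝ) *
          (((⌈(p : ℝ) ^ μ⌉₊ - 1 : ℕ) : ℝ) * ((⌈(p : ℝ) ^ s⌉₊ - 1 : ℕ) : ℝ) + ⌈(p : ℝ) ^ γ⌉₊) := by
        exact_mod_cast Nat.mul_le_mul_left _ (min_le_right _ _)
    _ ≤ (2 * (p : ℝ) ^ s) * ((p : ℝ) ^ μ * (p : ℝ) ^ s + 2 * (p : ℝ) ^ γ) := by
        gcongr
        exacts [natCeil_rpow_le_two_mul hp hs0, natCeil_sub_one_le (by positivity),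
          natCeil_sub_one_le (by positivity), natCeil_rpow_le_two_mul hp hγ0]
    _ = 6 * (p : ℝ) ^ (3 / 2 * s + 1 / 2 * t) := by
        rw [hμs, show 3 / 2 * s + 1 / 2 * t = s + γ by ring, Real.rpow_add hp0]; ring

theorem lineConfiguration_allIntercepts (hs0 : 0 ≤ s) (hs1 : s ≤ 1) (ht2 : t ≤ 2) :
    LineConfiguration (ZMod p) ((p : ℝ) ^ t) ((p : ℝ) ^ s) (2 * (p : ℝ) ^ (s + 1)) := by
  have hp : (1 : ℝ) ≤ p := by exact_mod_cast (Fact.out : p.Prime).one_lt.le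
  have hp0 : (0 : ℝ) < p := by linarith
  refine (lineConfiguration_castRange (C := p) (natCeil_rpow_le hp (by linarith : t - 1 ≤ 1))
    le_rfl (natCeil_rpow_le hp hs1)).mono ?_ (Nat.le_ceil _) ?_
  · rw [Nat.cast_mul, ← sub_add_cancel t 1, Real.rpow_add_one hp0.ne', add_sub_cancel_right]
    gcongr
    exact Nat.le_ceil _
  calc (((⌈(p : ℝ) ^ s⌉₊ * min p ((⌈(p : ℝ) ^ (t - 1)⌉₊ - 1) * (⌈(p : ℝ) ^ s⌉₊ - 1) + p)) : ℕ)
        : ℝ)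
      ≤ (⌈(p : ℝ) ^ s⌉₊ : ℝ) * p := by
        exact_mod_cast Nat.mul_le_mul_left _ (min_le_left _ _)
    _ ≤ (2 * (p : ℝ) ^ s) * p := by gcongr; exact natCeil_rpow_le_two_mul hp hs0
    _ = 2 * (p : ℝ) ^ (s + 1) := by rw [Real.rpow_add hp0, Real.rpow_one]; ring

end Rpow

/-- For every `s ∈ (0,1]`, `t ∈ [0,2]` there is a constant `C` (independent
of `p`) such that for every prime `p` there exist a family `𝓛` of lines of `F_p^2` with
`#𝓛 ≥ (1/2)p^t` and subsets `Y L ⊆ L` with `#(Y L) ≥ (1/2)p^s`, whose union `E` satisfies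
`#E ≤ C·p^(min (s+t) (min ((3/2)s + (1/2)t) (s+1)))`. -/
theorem stmt_5 (s t : ℝ) (hs0 : 0 < s) (hs1 : s ≤ 1) (ht0 : 0 ≤ t) (ht2 : t ≤ 2) :
    ∃ C : ℝ, 0 < C ∧ ∀ p : ℕ, p.Prime →
      ∃ (𝓛 : Set (AffineSubspace (ZMod p) (Fin 2 → ZMod p)))
        (Y : AffineSubspace (ZMod p) (Fin 2 → ZMod p) → Set (Fin 2 → ZMod p)),
        (∀ L ∈ 𝓛, (L : Set (Fin 2 → ZMod p)).Nonempty ∧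
            Module.finrank (ZMod p) L.direction = 1) ∧
        (1 / 2 * (p : ℝ) ^ t ≤ Nat.card 𝓛) ∧
        (∀ L ∈ 𝓛, Y L ⊆ (L : Set (Fin 2 → ZMod p)) ∧
            1 / 2 * (p : ℝ) ^ s ≤ Nat.card (Y L)) ∧
        ((Nat.card (⋃ L ∈ 𝓛, Y L) : ℝ) ≤
          C * (p : ℝ) ^ (min (s + t) (min (3 / 2 * s + 1 / 2 * t) (s + 1)))) := by
  refine ⟨12, by norm_num, fun p hp => ?_⟩
  have := Fact.mk hp
  have hp1 : (1 : ℝ) ≤ p := by exact_mod_cast hp.one_lt.le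
  set e := min (s + t) (min (3 / 2 * s + 1 / 2 * t) (s + 1))
  have weaken {c a : ℝ}
      (h : LineConfiguration (ZMod p) ((p : ℝ) ^ t) ((p : ℝ) ^ s) (c * p ^ a))
      (hc : c ≤ 12) (ha : a ≤ e) :
      LineConfiguration (ZMod p) (1 / 2 * (p : ℝ) ^ t) (1 / 2 * (p : ℝ) ^ s) (12 * p ^ e) := by
    refine h.mono ?_ ?_ ?_
    · linarith [Real.rpow_pos_of_pos (by linarith : (0 : ℝ) < p) t]
    · linarith [Real.rpow_pos_of_pos (by linarith : (0 : ℝ) < p) s]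
    · gcongr
  rcases le_total t s with hts | hst
  · exact weaken (lineConfiguration_parallel hs0.le hs1 ht0 (by linarith)) (by norm_num)
      (le_min le_rfl (le_min (by linarith) (by linarith)))
  rcases le_total (s + t) 2 with hst2 | hst2
  · exact weaken (lineConfiguration_balanced hs0.le hst hst2) (by norm_num)
      (le_min (by linarith) (le_min le_rfl (by linarith)))
  · exact weaken (lineConfiguration_allIntercepts hs0.le hs1 ht2) (by norm_num)
      (le_min (by linarith) (le_min (by linarith) le_rfl))
end

section
/- For q = p² (p prime), there exists in F_q^2 a family of q lines L and subsets Y(L) ⊆ L with #Y(L) = q^{1/2} for each L, such that #(⋃_{L∈L} Y(L)) = q. (Hence the Furstenberg bound min{s+t,(3/2)s+(1/2)t,s+1} with s=1/2, t=1, which equals 5/4, fails over non-prime finite fields.) -/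
set_option maxHeartbeats 1000000

section Aux
variable {p : ℕ} [hp : Fact p.Prime]

local notation "K" => GaloisField p 2

noncomputable def myLine (a b : K) : AffineSubspace K (Fin 2 → K) :=
  AffineSubspace.mk' ![0, b] (Submodule.span K {![1, a]})

lemma mem_myLine {a b : K} {v : Fin 2 → K} :
    v ∈ myLine a b ↔ v 1 = a * v 0 + b := by
  rw [myLine, AffineSubspace.mem_mk', Submodule.mem_span_singleton]
  constructor
  · rintro ⟨c, hc⟩
    have h0 := congrFun hc 0
    have h1 := congrFun hc 1
    simp [vsub_eq_sub] at h0 h1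
    rw [h0] at h1
    linear_combination -h1
  · intro h
    refine ⟨v 0, ?_⟩
    funext i
    fin_cases i <;> simp [vsub_eq_sub] <;> try linear_combination -h

end Aux

/-- For `q = p²` (`p` prime), there is a family of `q` lines `𝓛` in `F_q^2`
and subsets `Y L ⊆ L` with `#(Y L) = q^(1/2) = p` for each `L ∈ 𝓛`, such that
`#(⋃_{L ∈ 𝓛} Y L) = q`.  (Hence the Furstenberg bound with `s = 1/2`, `t = 1` fails over
non-prime finite fields.) -/
theorem stmt_7 (p : ℕ) [hp : Fact p.Prime] :
    ∃ (𝓛 : Set (AffineSubspace (GaloisField p 2) (Fin 2 → GaloisField p 2)))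
      (Y : AffineSubspace (GaloisField p 2) (Fin 2 → GaloisField p 2) →
        Set (Fin 2 → GaloisField p 2)),
      (∀ L ∈ 𝓛, (L : Set (Fin 2 → GaloisField p 2)).Nonempty ∧
          Module.finrank (GaloisField p 2) L.direction = 1) ∧
      Nat.card 𝓛 = p ^ 2 ∧
      (∀ L ∈ 𝓛, Y L ⊆ (L : Set (Fin 2 → GaloisField p 2)) ∧ Nat.card (Y L) = p) ∧
      Nat.card (⋃ L ∈ 𝓛, Y L) = p ^ 2 := by
  set K := GaloisField p 2
  set φ := algebraMap (ZMod p) K with hφ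
  have hφinj : Function.Injective φ := (algebraMap (ZMod p) K).injective
  set F : Set K := Set.range φ with hF
  set f : ZMod p × ZMod p → AffineSubspace K (Fin 2 → K) :=
    fun ab => myLine (φ ab.1) (φ ab.2) with hf
  have hfinj : Function.Injective f := by
    rintro ⟨a, b⟩ ⟨a', b'⟩ h
    have hb : (![0, φ b] : Fin 2 → K) ∈ f (a', b') := by
      rw [← h]; exact mem_myLine.2 (by simp)
    have hb' := mem_myLine.1 hb
    simp at hb'
    have hbe : b = b' := hφinj hb'
    have ha : (![1, φ a + φ b] : Fin 2 → K) ∈ f (a', b') := by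
      rw [← h]; exact mem_myLine.2 (by simp)
    have ha' := mem_myLine.1 ha
    simp [hb', hbe] at ha'
    exact Prod.ext (hφinj ha') hbe
  refine ⟨Set.range f, fun L => {v | v ∈ L ∧ v 0 ∈ F ∧ v 1 ∈ F}, ?_, ?_, ?_, ?_⟩
  · rintro L ⟨⟨a, b⟩, rfl⟩
    constructor
    · exact ⟨![0, φ b], mem_myLine.2 (by simp)⟩
    · show Module.finrank K (myLine (φ a) (φ b)).direction = 1
      rw [myLine, AffineSubspace.direction_mk']
      exact finrank_span_singleton (by
        intro h
        have := congrFun h 0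
        simp at this)
  · rw [Nat.card_range_of_injective hfinj]
    simp [Nat.card_eq_fintype_card, ZMod.card, sq]
  · rintro L ⟨⟨a, b⟩, rfl⟩
    refine ⟨fun v hv => hv.1, ?_⟩
    have hginj : Function.Injective (fun x : ZMod p => (![φ x, φ a * φ x + φ b] : Fin 2 → K)) := by
      intro x y hxy
      have := congrFun hxy 0
      simp at this
      exact hφinj this
    have hset : {v : Fin 2 → K | v ∈ f (a, b) ∧ v 0 ∈ F ∧ v 1 ∈ F}
        = (fun x : ZMod p => (![φ x, φ a * φ x + φ b] : Fin 2 → K)) '' Set.univ := by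
      ext v
      simp only [Set.mem_setOf_eq, Set.image_univ, Set.mem_range]
      constructor
      · rintro ⟨hv, ⟨x, hx⟩, -⟩
        refine ⟨x, ?_⟩
        have h1 := mem_myLine.1 hv
        funext i
        fin_cases i <;> simp [hx, h1]
      · rintro ⟨x, rfl⟩
        refine ⟨mem_myLine.2 (by simp), ⟨x, rfl⟩, ⟨a * x + b, by simp [map_add, map_mul]⟩⟩
    show Nat.card {v : Fin 2 → K | v ∈ f (a, b) ∧ v 0 ∈ F ∧ v 1 ∈ F} = p
    rw [hset, Nat.card_coe_set_eq, Set.ncard_image_of_injective _ hginj, Set.ncard_univ]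
    simp [Nat.card_eq_fintype_card, ZMod.card]
  · have hU : (⋃ L ∈ Set.range f, {v : Fin 2 → K | v ∈ L ∧ v 0 ∈ F ∧ v 1 ∈ F})
        = (fun xy : ZMod p × ZMod p => (![φ xy.1, φ xy.2] : Fin 2 → K)) '' Set.univ := by
      ext v
      simp only [Set.mem_iUnion, Set.mem_setOf_eq, Set.mem_range, Set.image_univ]
      constructor
      · rintro ⟨L, ⟨ab, rfl⟩, -, ⟨x, hx⟩, ⟨y, hy⟩⟩
        refine ⟨(x, y), ?_⟩
        funext i
        fin_cases i <;> simp [hx, hy]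
      · rintro ⟨⟨x, y⟩, rfl⟩
        exact ⟨f (0, y), ⟨(0, y), rfl⟩, mem_myLine.2 (by simp), ⟨x, rfl⟩, ⟨y, rfl⟩⟩
    have hginj : Function.Injective (fun xy : ZMod p × ZMod p => (![φ xy.1, φ xy.2] : Fin 2 → K)) := by
      rintro ⟨x, y⟩ ⟨x', y'⟩ h
      have h0 := congrFun h 0
      have h1 := congrFun h 1
      simp at h0 h1
      exact Prod.ext (hφinj h0) (hφinj h1)
    rw [hU, Nat.card_coe_set_eq, Set.ncard_image_of_injective _ hginj, Set.ncard_univ]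
    simp [Nat.card_eq_fintype_card, ZMod.card, sq]
end

section
/- Define the Furstenberg index F(s,t;n,k) as in the given piecewise definition. Then for every admissible (s,t;n,k), F(s,t;n,k) ≥ s + max{0, t − k(n−k)}. -/
set_option maxHeartbeats 1000000


/-- The Furstenberg index `F(s,t;n,k)` of the paper, defined via the canonical
decompositions `s = d + σ` (`d ∈ ℕ`, `σ ∈ (0,1]`) and, when applicable,
`t = (k-d-1)(n-k) + (d+2)m + τ` (`m ∈ {0,…,n-k-1}`, `τ ∈ (0,d+2]`):
(a) `F(0,t;n,k) = max 0 (t - k(n-k))`;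
(b) if `s > 0` and `t ≤ (k-d-1)(n-k)`, then `F = s`;
(c) if `τ ∈ (0,2]`, then `F = s + m + min τ (min ((σ+τ)/2) 1)`;
(d) if `τ ∈ (2,d+2]`, then `F = s + m + 1`. -/
noncomputable def fIndex (n k : ℕ) (s t : ℝ) : ℝ :=
  if s ≤ 0 then max 0 (t - k * (n - k : ℝ))
  else
    let d : ℤ := ⌈s⌉ - 1
    let σ : ℝ := s - d
    if t ≤ ((k : ℝ) - d - 1) * ((n : ℝ) - k) then s
    else
      let r : ℝ := t - ((k : ℝ) - d - 1) * ((n : ℝ) - k)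
      let m : ℤ := ⌈r / ((d : ℝ) + 2)⌉ - 1
      let τ : ℝ := r - ((d : ℝ) + 2) * m
      if τ ≤ 2 then s + m + min τ (min ((σ + τ) / 2) 1)
      else s + m + 1

/-- For every admissible `(s,t;n,k)`,
`F(s,t;n,k) ≥ s + max 0 (t - k(n-k))`. -/
theorem stmt_8 (n k : ℕ) (s t : ℝ) (hk1 : 1 ≤ k) (hkn : k < n)
    (hs0 : 0 ≤ s) (hsk : s ≤ k) (ht0 : 0 ≤ t) (ht : t ≤ (k + 1) * ((n : ℝ) - k)) :
    s + max 0 (t - k * ((n : ℝ) - k)) ≤ fIndex n k s t := by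
  have hnk : (1 : ℝ) ≤ (n : ℝ) - k := by
    have : (k : ℝ) + 1 ≤ n := by exact_mod_cast hkn
    linarith
  rw [fIndex]
  simp only
  split_ifs with h1 h2 h3
  · -- s ≤ 0, so s = 0
    have hs : s = 0 := le_antisymm h1 hs0
    simp [hs]
  · -- branch (b)
    set d : ℤ := ⌈s⌉ - 1 with hd
    have hs' : 0 < s := lt_of_not_ge h1
    have hd0 : (0 : ℝ) ≤ (d : ℝ) := by
      have : (1 : ℤ) ≤ ⌈s⌉ := Int.ceil_pos.mpr hs'
      have : (0 : ℤ) ≤ d := by omega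
      exact_mod_cast this
    have hmax : t - k * ((n : ℝ) - k) ≤ 0 := by nlinarith
    have : max 0 (t - k * ((n : ℝ) - k)) = 0 := max_eq_left hmax
    linarith
  all_goals (
    set d : ℤ := ⌈s⌉ - 1 with hd
    set r : ℝ := t - ((k : ℝ) - d - 1) * ((n : ℝ) - k) with hr
    set m : ℤ := ⌈r / ((d : ℝ) + 2)⌉ - 1 with hm
    have hs' : 0 < s := lt_of_not_ge h1
    have hd0 : (0 : ℝ) ≤ (d : ℝ) := by
      have h : (1 : ℤ) ≤ ⌈s⌉ := Int.ceil_pos.mpr hs'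
      have h2 : (0 : ℤ) ≤ d := by omega
      exact_mod_cast h2
    have hσ0 : (0 : ℝ) < s - d := by
      have := Int.ceil_lt_add_one s
      push_cast [hd]; push_cast at this; linarith
    have hσ1 : s - (d : ℝ) ≤ 1 := by
      have := Int.le_ceil s
      push_cast [hd]; push_cast at this; linarith
    have hdk : (d : ℝ) ≤ (k : ℝ) - 1 := by
      have h : ⌈s⌉ ≤ (k : ℤ) := Int.ceil_le.mpr (by exact_mod_cast hsk)
      have h2 : d ≤ (k : ℤ) - 1 := by omega
      calc (d : ℝ) ≤ ((k : ℤ) - 1 : ℤ) := by exact_mod_cast h2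
        _ = (k : ℝ) - 1 := by push_cast; ring
    have hd2 : (0 : ℝ) < (d : ℝ) + 2 := by linarith
    have hr0 : 0 < r := by rw [hr]; linarith [lt_of_not_ge h2]
    have hm0 : (0 : ℝ) ≤ (m : ℝ) := by
      have h : (1 : ℤ) ≤ ⌈r / ((d : ℝ) + 2)⌉ := Int.ceil_pos.mpr (div_pos hr0 hd2)
      have h2 : (0 : ℤ) ≤ m := by omega
      exact_mod_cast h2
    have hτ0 : 0 < r - ((d : ℝ) + 2) * m := by
      have h := Int.ceil_lt_add_one (r / ((d : ℝ) + 2))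
      have hmr : (m : ℝ) < r / ((d : ℝ) + 2) := by push_cast [hm]; push_cast at h; linarith
      have := (lt_div_iff₀ hd2).mp hmr
      nlinarith
    have hτd2 : r - ((d : ℝ) + 2) * m ≤ (d : ℝ) + 2 := by
      have h := Int.le_ceil (r / ((d : ℝ) + 2))
      have hmr : r / ((d : ℝ) + 2) ≤ (m : ℝ) + 1 := by push_cast [hm]; push_cast at h; linarith
      have := (div_le_iff₀ hd2).mp hmr
      nlinarith
    have hmnk : (m : ℝ) ≤ (n : ℝ) - k - 1 := by
      have hrle : r ≤ ((d : ℝ) + 2) * ((n : ℝ) - k) := by rw [hr]; nlinarith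
      have hdiv : r / ((d : ℝ) + 2) ≤ ((n : ℝ) - k) := (div_le_iff₀ hd2).mpr (by nlinarith)
      have hcast : ((n : ℝ) - k) = (((n : ℤ) - k : ℤ) : ℝ) := by push_cast; ring
      have hceil : ⌈r / ((d : ℝ) + 2)⌉ ≤ (n : ℤ) - k := by
        apply Int.ceil_le.mpr; rw [← hcast]; exact hdiv
      have h2 : m ≤ (n : ℤ) - k - 1 := by omega
      calc (m : ℝ) ≤ (((n : ℤ) - k - 1 : ℤ) : ℝ) := by exact_mod_cast h2
        _ = (n : ℝ) - k - 1 := by push_cast; ring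
    have hdm : (d : ℝ) * m ≤ (d : ℝ) * ((n : ℝ) - k - 1) :=
      mul_le_mul_of_nonneg_left hmnk hd0
    skip)
  · -- case (c): τ ≤ 2
    have hmin1 : (r - ((d : ℝ) + 2) * m) - 1 ≤
        min (r - ((d : ℝ) + 2) * m) (min ((s - (d : ℝ) + (r - ((d : ℝ) + 2) * m)) / 2) 1) := by
      refine le_min (by linarith) (le_min (by linarith) (by linarith))
    have hmin0 : (0 : ℝ) ≤
        min (r - ((d : ℝ) + 2) * m) (min ((s - (d : ℝ) + (r - ((d : ℝ) + 2) * m)) / 2) 1) := by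
      refine le_min (by linarith) (le_min (by linarith) (by linarith))
    rcases le_total (t - k * ((n : ℝ) - k)) 0 with hX | hX
    · rw [max_eq_left hX]; nlinarith
    · rw [max_eq_right hX]
      have hXle : t - k * ((n : ℝ) - k) ≤ (m : ℝ) +
          min (r - ((d : ℝ) + 2) * m) (min ((s - (d : ℝ) + (r - ((d : ℝ) + 2) * m)) / 2) 1) := by
        nlinarith [hdm, hmin1]
      linarith
  · -- case (d): τ > 2
    have hX : t - k * ((n : ℝ) - k) ≤ (m : ℝ) + 1 := by nlinarith [hdm, hτd2]
    rcases le_total (t - k * ((n : ℝ) - k)) 0 with hX0 | hX0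
    · rw [max_eq_left hX0]; linarith
    · rw [max_eq_right hX0]; linarith
end

section
/- For fixed t, n, k, the Furstenberg index is locally left-Lipschitz in s: writing s = d+σ with d ∈ ℕ and σ ∈ (0,1], there is a constant C (depending only on n,k) such that F(s−θ, t; n, k) ≥ F(s,t;n,k) − Cθ for all 0 ≤ θ < σ. -/
/-- For fixed `t, n, k`, the Furstenberg index is locally left-Lipschitz
in `s`: writing `s = d + σ` with `d ∈ ℕ`, `σ ∈ (0,1]` (so `d = ⌈s⌉ - 1`,
`σ = s - d`), there is a constant `C` depending only on `n, k` with
`F(s-θ, t; n, k) ≥ F(s,t;n,k) - Cθ` for all `0 ≤ θ < σ`. -/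
theorem stmt_10 (n k : ℕ) (hk1 : 1 ≤ k) (hkn : k < n) :
    ∃ C : ℝ, 0 < C ∧ ∀ s t θ : ℝ, 0 < s → s ≤ k →
      0 ≤ t → t ≤ (k + 1) * ((n : ℝ) - k) →
      0 ≤ θ → θ < s - ((⌈s⌉ : ℝ) - 1) →
      fIndex n k s t - C * θ ≤ fIndex n k (s - θ) t := by
  refine ⟨2, by norm_num, fun s t θ hs hsk ht htk hθ0 hθ => ?_⟩
  have hc1 : (0:ℤ) < ⌈s⌉ := Int.ceil_pos.mpr hs
  have hc1' : (1:ℝ) ≤ (⌈s⌉:ℝ) := by exact_mod_cast hc1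
  have hs2 : 0 < s - θ := by linarith
  have hceil : ⌈s - θ⌉ = ⌈s⌉ := by
    rw [Int.ceil_eq_iff]
    · constructor
      · push_cast; linarith
      · have := Int.le_ceil s; push_cast at this ⊢; linarith
  simp only [fIndex, hceil, if_neg (not_le.mpr hs), if_neg (not_le.mpr hs2)]
  split_ifs with h1 h2
  · linarith
  · push_cast
    simp only [min_def]
    split_ifs <;> linarith
  · linarith
end

section
/- Let k ≥ 2 and suppose (s,t;k+1,k) is admissible. Suppose real numbers t₁ ∈ [0,k−1], t₂ ∈ [0,2], s₁ ∈ [0,1], s₂ ∈ [0,s], u ∈ [s₁,1], v ∈ [0,1] satisfy t₁+t₂ = t, s₁+s₂ = s, and u+v = F(s₁,t₂;2,1). Then u + max{F(s₂, t₁+v; k, k−1), s₂+v} ≥ F(s,t;k+1,k). -/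
set_option maxHeartbeats 1000000


lemma fIndex_zero (n k : ℕ) (s t : ℝ) (hs : s ≤ 0) :
    fIndex n k s t = max 0 (t - k * ((n : ℝ) - k)) := by
  rw [fIndex, if_pos hs]

lemma fIndex_zero_cases (n k : ℕ) (s t : ℝ) (hs : s ≤ 0) :
    0 ≤ fIndex n k s t ∧ t - k * ((n : ℝ) - k) ≤ fIndex n k s t ∧
      (fIndex n k s t = 0 ∨ fIndex n k s t = t - k * ((n : ℝ) - k)) := by
  rw [fIndex_zero n k s t hs]
  exact ⟨le_max_left _ _, le_max_right _ _, by
    rcases max_cases (0 : ℝ) (t - k * ((n : ℝ) - k)) with ⟨h, _⟩ | ⟨h, _⟩ <;>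
      [left; right] <;> rw [h]⟩

lemma min3_cases (a b c : ℝ) :
    (min a (min b c) = a ∧ a ≤ b ∧ a ≤ c) ∨
    (min a (min b c) = b ∧ b ≤ a ∧ b ≤ c) ∨
    (min a (min b c) = c ∧ c ≤ a ∧ c ≤ b) := by
  rcases le_total b c with h1 | h1
  · rw [min_eq_left h1]
    rcases le_total a b with h2 | h2
    · exact Or.inl ⟨min_eq_left h2, h2, le_trans h2 h1⟩
    · exact Or.inr (Or.inl ⟨min_eq_right h2, h2, h1⟩)
  · rw [min_eq_right h1]
    rcases le_total a c with h3 | h3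
    · exact Or.inl ⟨min_eq_left h3, le_trans h3 h1, h3⟩
    · exact Or.inr (Or.inr ⟨min_eq_right h3, h3, h1⟩)

lemma fIndex_pos_eq (K : ℕ) (s t : ℝ) (hs : 0 < s) (htK : t ≤ (K : ℝ) + 1) :
    fIndex (K + 1) K s t =
      if t ≤ (K : ℝ) - ⌈s⌉ then s
      else s + min (t - ((K : ℝ) - ⌈s⌉))
        (min ((s - ⌈s⌉ + 1 + (t - ((K : ℝ) - ⌈s⌉))) / 2) 1) := by
  have hC : (1 : ℝ) ≤ (⌈s⌉ : ℝ) := by exact_mod_cast Int.ceil_pos.2 hs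
  have hCs : s ≤ (⌈s⌉ : ℝ) := Int.le_ceil s
  have hsC : (⌈s⌉ : ℝ) < s + 1 := by have := Int.ceil_lt_add_one s; linarith
  rw [fIndex, if_neg (not_le.2 hs)]
  have hnk : ((K + 1 : ℕ) : ℝ) - (K : ℕ) = 1 := by push_cast; ring
  simp only [hnk, mul_one]
  have hd : ((⌈s⌉ - 1 : ℤ) : ℝ) = (⌈s⌉ : ℝ) - 1 := by push_cast; ring
  rw [hd]
  have hthr : (K : ℝ) - ((⌈s⌉ : ℝ) - 1) - 1 = (K : ℝ) - ⌈s⌉ := by ring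
  rw [hthr]
  have hden : (0 : ℝ) < (⌈s⌉ : ℝ) - 1 + 2 := by linarith
  split_ifs with h1 h2
  · rfl
  all_goals {
    have hm : ⌈(t - ((K : ℝ) - ⌈s⌉)) / ((⌈s⌉ : ℝ) - 1 + 2)⌉ = 1 := by
      rw [Int.ceil_eq_iff]
      refine ⟨?_, ?_⟩
      · push_cast
        rw [lt_div_iff₀ hden]
        push_neg at h1
        linarith
      · rw [div_le_iff₀ hden]
        push_cast
        linarith
    rw [hm] at h2 ⊢
    push_cast at h2 ⊢
    first
    | (ring_nf; done)
    | · have h3 : min ((s - (⌈s⌉:ℝ) + 1 + (t - ((K : ℝ) - ⌈s⌉))) / 2) 1 = 1 :=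
          min_eq_right (by linarith)
        rw [h3, min_eq_right (by linarith)]
        ring }

lemma fIndex_cases (K : ℕ) (s t : ℝ) (hs : 0 < s) (htK : t ≤ (K : ℝ) + 1) :
    (t ≤ (K : ℝ) - ⌈s⌉ ∧ fIndex (K + 1) K s t = s) ∨
    ((K : ℝ) - ⌈s⌉ < t ∧
      ((fIndex (K + 1) K s t = s + (t - ((K : ℝ) - ⌈s⌉)) ∧
          t - ((K : ℝ) - ⌈s⌉) ≤ (s - ⌈s⌉ + 1 + (t - ((K : ℝ) - ⌈s⌉))) / 2 ∧
          t - ((K : ℝ) - ⌈s⌉) ≤ 1) ∨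
       (fIndex (K + 1) K s t = s + (s - ⌈s⌉ + 1 + (t - ((K : ℝ) - ⌈s⌉))) / 2 ∧
          (s - ⌈s⌉ + 1 + (t - ((K : ℝ) - ⌈s⌉))) / 2 ≤ t - ((K : ℝ) - ⌈s⌉) ∧
          (s - ⌈s⌉ + 1 + (t - ((K : ℝ) - ⌈s⌉))) / 2 ≤ 1) ∨
       (fIndex (K + 1) K s t = s + 1 ∧ 1 ≤ t - ((K : ℝ) - ⌈s⌉) ∧
          1 ≤ (s - ⌈s⌉ + 1 + (t - ((K : ℝ) - ⌈s⌉))) / 2))) := by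
  rw [fIndex_pos_eq K s t hs htK]
  rcases le_or_gt t ((K : ℝ) - ⌈s⌉) with h | h
  · exact Or.inl ⟨h, if_pos h⟩
  · refine Or.inr ⟨h, ?_⟩
    rw [if_neg (not_le.2 h)]
    rcases min3_cases (t - ((K : ℝ) - ⌈s⌉))
        ((s - ⌈s⌉ + 1 + (t - ((K : ℝ) - ⌈s⌉))) / 2) 1 with
      ⟨h1, h2, h3⟩ | ⟨h1, h2, h3⟩ | ⟨h1, h2, h3⟩
    · exact Or.inl ⟨by rw [h1], h2, h3⟩
    · exact Or.inr (Or.inl ⟨by rw [h1], h2, h3⟩)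
    · exact Or.inr (Or.inr ⟨by rw [h1], h2, h3⟩)

/-- Let `k ≥ 2` and `(s,t;k+1,k)` admissible. If
`t₁ ∈ [0,k-1]`, `t₂ ∈ [0,2]`, `s₁ ∈ [0,1]`, `s₂ ∈ [0,s]`, `u ∈ [s₁,1]`,
`v ∈ [0,1]` satisfy `t₁+t₂ = t`, `s₁+s₂ = s` and `u+v = F(s₁,t₂;2,1)`, then
`u + max (F(s₂,t₁+v;k,k-1)) (s₂+v) ≥ F(s,t;k+1,k)`. -/
theorem stmt_11 (k : ℕ) (hk : 2 ≤ k) (s t t₁ t₂ s₁ s₂ u v : ℝ)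
    (hs0 : 0 ≤ s) (hsk : s ≤ k) (ht0 : 0 ≤ t) (ht : t ≤ (k + 1) * (((k : ℝ) + 1) - k))
    (ht1 : 0 ≤ t₁) (ht1' : t₁ ≤ (k : ℝ) - 1) (ht2 : 0 ≤ t₂) (ht2' : t₂ ≤ 2)
    (hs1 : 0 ≤ s₁) (hs1' : s₁ ≤ 1) (hs2 : 0 ≤ s₂) (hs2' : s₂ ≤ s)
    (hu : s₁ ≤ u) (hu' : u ≤ 1) (hv : 0 ≤ v) (hv' : v ≤ 1)
    (hT : t₁ + t₂ = t) (hS : s₁ + s₂ = s) (hUV : u + v = fIndex 2 1 s₁ t₂) :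
    fIndex (k + 1) k s t ≤ u + max (fIndex k (k - 1) s₂ (t₁ + v)) (s₂ + v) := by
  obtain ⟨K, rfl⟩ : ∃ K, k = K + 1 := ⟨k - 1, by omega⟩
  have hK1 : 1 ≤ K := by omega
  have hKR : (1 : ℝ) ≤ (K : ℝ) := by exact_mod_cast hK1
  have hkk : K + 1 - 1 = K := by omega
  rw [hkk]
  push_cast at ht ht1' hsk
  have htR : t ≤ ((K + 1 : ℕ) : ℝ) + 1 := by push_cast; linarith
  have hT2K : t₁ + v ≤ (K : ℝ) + 1 := by linarith
  have hc2 : ((K + 1 : ℕ) : ℝ) = (K : ℝ) + 1 := by push_cast; ring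
  have hmL := le_max_left (fIndex (K + 1) K s₂ (t₁ + v)) (s₂ + v)
  have hmR := le_max_right (fIndex (K + 1) K s₂ (t₁ + v)) (s₂ + v)
  rcases le_or_gt s₁ 0 with hs1z | hs1p
  · -- s₁ = 0, s₂ = s
    have hs1e : s₁ = 0 := le_antisymm hs1z hs1
    subst hs1e
    rw [fIndex_zero 2 1 0 t₂ le_rfl] at hUV
    norm_num at hUV
    have hUV1 : u + v = 0 ∨ u + v = t₂ - 1 := by
      rcases max_cases (0 : ℝ) (t₂ - 1) with ⟨h, _⟩ | ⟨h, _⟩ <;> rw [h] at hUV <;>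
        [left; right] <;> linarith
    have hUV2 : 0 ≤ u + v := by
      rcases max_cases (0 : ℝ) (t₂ - 1) with ⟨h, h'⟩ | ⟨h, h'⟩ <;> rw [h] at hUV <;> linarith
    have hUV3 : t₂ - 1 ≤ u + v := by
      rcases max_cases (0 : ℝ) (t₂ - 1) with ⟨h, h'⟩ | ⟨h, h'⟩ <;> rw [h] at hUV <;> linarith
    rcases le_or_gt s₂ 0 with hsz | hsp
    · -- s = 0 as well
      have hse : s = 0 := by linarith
      obtain ⟨hL0, hL1, hL2⟩ := fIndex_zero_cases (K + 1 + 1) (K + 1) s t (le_of_eq hse)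
      obtain ⟨hF0, hF1, hF2⟩ := fIndex_zero_cases (K + 1) K s₂ (t₁ + v) hsz
      have e1 : ((K + 1 : ℕ) : ℝ) * (((K + 1 + 1 : ℕ) : ℝ) - ((K + 1 : ℕ) : ℝ)) = (K : ℝ) + 1 := by
        push_cast; ring
      have e2 : ((K : ℕ) : ℝ) * (((K + 1 : ℕ) : ℝ) - ((K : ℕ) : ℝ)) = (K : ℝ) := by
        push_cast; ring
      rcases hL2 with h | h <;> rcases hF2 with h' | h' <;>
        rcases hUV1 with h'' | h'' <;> linarith
    · -- s = s₂ > 0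
      have hsp' : 0 < s := by linarith
      have hss : s₂ = s := by linarith
      subst hss
      have hCs : s₂ ≤ (⌈s₂⌉ : ℝ) := Int.le_ceil s₂
      have hsC : (⌈s₂⌉ : ℝ) < s₂ + 1 := by have := Int.ceil_lt_add_one s₂; linarith
      have hC1 : (1 : ℝ) ≤ (⌈s₂⌉ : ℝ) := by exact_mod_cast Int.ceil_pos.2 hsp
      have hCK : (⌈s₂⌉ : ℝ) ≤ (K : ℝ) + 1 := by
        have : ⌈s₂⌉ ≤ (K + 1 : ℤ) := Int.ceil_le.2 (by push_cast; linarith)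
        exact_mod_cast this
      obtain hL := fIndex_cases (K + 1) s₂ t hsp htR
      obtain hF := fIndex_cases K s₂ (t₁ + v) hsp hT2K
      rcases hL with ⟨hg, he⟩ | ⟨hg, ⟨he, hb1', hb2'⟩ | ⟨he, hb1', hb2'⟩ | ⟨he, hb1', hb2'⟩⟩ <;>
        rcases hF with ⟨hg2, he2⟩ | ⟨hg2, ⟨he2, hb1, hb2⟩ | ⟨he2, hb1, hb2⟩ | ⟨he2, hb1, hb2⟩⟩ <;>
        rcases hUV1 with h'' | h'' <;> linarith
  · -- s₁ > 0
    have e : fIndex 2 1 s₁ t₂ = fIndex (1 + 1) 1 s₁ t₂ := rfl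
    rw [e] at hUV
    have hC1R : ((⌈s₁⌉ : ℤ) : ℝ) = 1 := by
      have : ⌈s₁⌉ = 1 := by
        rw [Int.ceil_eq_iff]
        constructor <;> push_cast <;> linarith
      rw [this]; norm_num
    have hc1 : ((1 : ℕ) : ℝ) = 1 := by norm_num
    obtain hF1 := fIndex_cases 1 s₁ t₂ hs1p (by rw [hc1]; linarith)
    have hsp' : 0 < s := by linarith
    have hCs : s ≤ (⌈s⌉ : ℝ) := Int.le_ceil s
    have hsC : (⌈s⌉ : ℝ) < s + 1 := by have := Int.ceil_lt_add_one s; linarith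
    have hC1 : (1 : ℝ) ≤ (⌈s⌉ : ℝ) := by exact_mod_cast Int.ceil_pos.2 hsp'
    have hCK : (⌈s⌉ : ℝ) ≤ (K : ℝ) + 1 := by
      have : ⌈s⌉ ≤ (K + 1 : ℤ) := Int.ceil_le.2 (by push_cast; linarith)
      exact_mod_cast this
    obtain hL := fIndex_cases (K + 1) s t hsp' htR
    rcases le_or_gt s₂ 0 with hsz | hsp
    · -- s₂ = 0, s = s₁
      obtain ⟨hF0, hFt, hFe⟩ := fIndex_zero_cases (K + 1) K s₂ (t₁ + v) hsz
      have e2 : ((K : ℕ) : ℝ) * (((K + 1 : ℕ) : ℝ) - ((K : ℕ) : ℝ)) = (K : ℝ) := by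
        push_cast; ring
      have hCeq : (⌈s⌉ : ℝ) = 1 := by
        have : ⌈s⌉ = 1 := by
          rw [Int.ceil_eq_iff]
          constructor <;> push_cast <;> linarith
        rw [this]; norm_num
      rcases hL with ⟨hg, he⟩ | ⟨hg, ⟨he, hb1', hb2'⟩ | ⟨he, hb1', hb2'⟩ | ⟨he, hb1', hb2'⟩⟩ <;>
        rcases hF1 with ⟨hg1, he1⟩ | ⟨hg1, ⟨he1, hc1', hc2'⟩ | ⟨he1, hc1', hc2'⟩ | ⟨he1, hc1', hc2'⟩⟩ <;>
        rcases hFe with hz | hz <;> linarith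
    · -- s₂ > 0, s > 0
      have hCs2 : s₂ ≤ (⌈s₂⌉ : ℝ) := Int.le_ceil s₂
      have hsC2 : (⌈s₂⌉ : ℝ) < s₂ + 1 := by have := Int.ceil_lt_add_one s₂; linarith
      have hC12 : (1 : ℝ) ≤ (⌈s₂⌉ : ℝ) := by exact_mod_cast Int.ceil_pos.2 hsp
      have hle : ⌈s₂⌉ ≤ ⌈s⌉ := Int.ceil_le_ceil hs2'
      have hge : ⌈s⌉ ≤ ⌈s₂⌉ + 1 := by
        calc ⌈s⌉ ≤ ⌈s₂ + 1⌉ := Int.ceil_le_ceil (by linarith)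
          _ = ⌈s₂⌉ + 1 := by rw [Int.ceil_add_one]
      have hA : (⌈s₂⌉ : ℝ) = (⌈s⌉ : ℝ) ∨ (⌈s₂⌉ : ℝ) = (⌈s⌉ : ℝ) - 1 := by
        have h : ⌈s₂⌉ = ⌈s⌉ ∨ ⌈s₂⌉ = ⌈s⌉ - 1 := by omega
        rcases h with h | h <;> [left; right] <;> rw [h] <;> push_cast <;> ring
      obtain hF := fIndex_cases K s₂ (t₁ + v) hsp hT2K
      rcases hL with ⟨hg, he⟩ | ⟨hg, ⟨he, hb1', hb2'⟩ | ⟨he, hb1', hb2'⟩ | ⟨he, hb1', hb2'⟩⟩ <;>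
        rcases hF with ⟨hg2, he2⟩ | ⟨hg2, ⟨he2, hb1, hb2⟩ | ⟨he2, hb1, hb2⟩ | ⟨he2, hb1, hb2⟩⟩ <;>
        rcases hF1 with ⟨hg1, he1⟩ | ⟨hg1, ⟨he1, hc1', hc2'⟩ | ⟨he1, hc1', hc2'⟩ | ⟨he1, hc1', hc2'⟩⟩ <;>
        rcases hA with hA | hA <;> linarith
end

section
/- Let k ≥ 2 and suppose (s,t;k+1,k) is admissible. Suppose real numbers t₁ ∈ [0,k−1], t₂ ∈ [0,2], s₁ ∈ [0,1], s₂ ∈ [0,s], u ∈ [s₁,1], v ∈ [0,1] satisfy the inequalities t₁+t₂ ≥ t, s₁+s₂ ≥ s, and u+v ≥ F(s₁,t₂;2,1). Then u + max{F(s₂, t₁+v; k, k−1), s₂+v} ≥ F(s,t;k+1,k). -/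
noncomputable def fIndexCodimOne (k s t : ℝ) : ℝ :=
  s + max 0 (min (t - k + ⌈s⌉) (min ((s + t - k + 1) / 2) 1))

lemma fIndex_succ_self (k : ℕ) {s t : ℝ} (hs : 0 ≤ s) (ht : t ≤ k + 1) :
    fIndex (k + 1) k s t = fIndexCodimOne k s t := by
  have hnk : ((k + 1 : ℕ) : ℝ) - k = 1 := by push_cast; ring
  rcases hs.eq_or_lt with rfl | hs
  · have hmin : min (t - k) (min ((t - k + 1) / 2) 1) = t - k :=
      min_eq_left (le_min (by linarith) (by linarith))
    simp [fIndex, fIndexCodimOne, hmin]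
  have hc₁ : (1 : ℝ) ≤ ⌈s⌉ := by exact_mod_cast Int.one_le_ceil_iff.mpr hs
  have hcs : s ≤ ⌈s⌉ := Int.le_ceil s
  have hcs' : (⌈s⌉ : ℝ) < s + 1 := Int.ceil_lt_add_one s
  have hr : t - (k - (⌈s⌉ - 1) - 1) = t - k + ⌈s⌉ := by ring
  have hσ : (s - (⌈s⌉ - 1) + (t - k + ⌈s⌉)) / 2 = (s + t - k + 1) / 2 := by ring
  simp only [fIndex, fIndexCodimOne, if_neg hs.not_ge, hnk, mul_one, Int.cast_sub, Int.cast_one, hr]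
  split_ifs with hr₀ hτ
  · rw [max_eq_left ((min_le_left _ _).trans (by linarith))]
    ring
  all_goals
    -- `0 < t - k + ⌈s⌉ ≤ ⌈s⌉ + 1 = d + 2`, so `m = 0`
    have hm : ⌈(t - k + ⌈s⌉) / ((⌈s⌉ : ℝ) - 1 + 2)⌉ = 1 := by
      rw [Int.ceil_eq_iff, div_le_iff₀ (by linarith), lt_div_iff₀ (by linarith)]
      push_cast
      constructor <;> linarith
    simp only [hm, Int.cast_one, sub_self, mul_zero, sub_zero, add_zero, hσ] at hτ ⊢
  · rw [max_eq_right (le_min (by linarith) (le_min (by linarith) zero_le_one))]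
  · rw [min_eq_right (by linarith : (1 : ℝ) ≤ (s + t - k + 1) / 2), min_eq_right (by linarith),
      max_eq_right zero_le_one]

lemma fIndexCodimOne_le_iff {k s t r : ℝ} :
    fIndexCodimOne k s t ≤ r ↔
      s ≤ r ∧ (s + (t - k + ⌈s⌉) ≤ r ∨ s + (s + t - k + 1) / 2 ≤ r ∨ s + 1 ≤ r) := by
  rw [fIndexCodimOne, ← le_sub_iff_add_le', max_le_iff, min_le_iff, min_le_iff]
  simp only [le_sub_iff_add_le', add_zero]

lemma fIndexCodimOne_le_add_max {k s t t₁ t₂ s₁ s₂ u v : ℝ} (hv : v ≤ 1)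
    (hT : t ≤ t₁ + t₂) (hS : s ≤ s₁ + s₂) (hu : s₁ ≤ u)
    (hUV : fIndexCodimOne 1 s₁ t₂ ≤ u + v) :
    fIndexCodimOne k s t ≤ u + max (fIndexCodimOne (k - 1) s₂ (t₁ + v)) (s₂ + v) := by
  set F₂ := fIndexCodimOne (k - 1) s₂ (t₁ + v)
  obtain ⟨-, hF₁⟩ := fIndexCodimOne_le_iff.mp (le_refl (fIndexCodimOne 1 s₁ t₂))
  obtain ⟨hF₂₀, hF₂⟩ := fIndexCodimOne_le_iff.mp (le_refl F₂)
  have hM₁ : F₂ ≤ max F₂ (s₂ + v) := le_max_left _ _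
  have hM₂ : s₂ + v ≤ max F₂ (s₂ + v) := le_max_right _ _
  have hceil : (⌈s⌉ : ℝ) ≤ ⌈s₁⌉ + ⌈s₂⌉ := by
    exact_mod_cast (Int.ceil_le_ceil hS).trans (Int.ceil_add_le s₁ s₂)
  have hc₁ := Int.le_ceil s₁
  have hc₂ := Int.le_ceil s₂
  refine fIndexCodimOne_le_iff.mpr ⟨by linarith, ?_⟩
  rcases hF₁ with h₁ | h₁ | h₁ <;> rcases hF₂ with h₂ | h₂ | h₂ <;>
  first
  | exact Or.inl (by linarith)
  | exact Or.inr (Or.inl (by linarith))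
  | exact Or.inr (Or.inr (by linarith))

theorem stmt_12_general (k : ℕ) (hk : 2 ≤ k) (s t t₁ t₂ s₁ s₂ u v : ℝ)
    (hs0 : 0 ≤ s) (ht : t ≤ (k : ℝ) + 1)
    (ht1' : t₁ ≤ (k : ℝ) - 1) (ht2' : t₂ ≤ 2)
    (hs1 : 0 ≤ s₁) (hs2 : 0 ≤ s₂)
    (hu : s₁ ≤ u) (hv' : v ≤ 1)
    (hT : t ≤ t₁ + t₂) (hS : s ≤ s₁ + s₂) (hUV : fIndex 2 1 s₁ t₂ ≤ u + v) :
    fIndex (k + 1) k s t ≤ u + max (fIndex k (k - 1) s₂ (t₁ + v)) (s₂ + v) := by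
  obtain ⟨j, rfl⟩ : ∃ j, k = j + 1 := ⟨k - 1, by omega⟩
  have hj : ((j + 1 : ℕ) : ℝ) - 1 = j := by push_cast; ring
  rw [hj] at ht1'
  have hF₁ : fIndex 2 1 s₁ t₂ = fIndexCodimOne 1 s₁ t₂ := by
    simpa using fIndex_succ_self 1 hs1 (by norm_num; linarith)
  rw [fIndex_succ_self _ hs0 ht, Nat.add_sub_cancel, fIndex_succ_self j hs2 (by linarith), ← hj]
  exact fIndexCodimOne_le_add_max hv' hT hS hu (hF₁ ▸ hUV)

/-- Let `k ≥ 2` and `(s,t;k+1,k)` admissible. If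
`t₁ ∈ [0,k-1]`, `t₂ ∈ [0,2]`, `s₁ ∈ [0,1]`, `s₂ ∈ [0,s]`, `u ∈ [s₁,1]`,
`v ∈ [0,1]` satisfy `t₁+t₂ ≥ t`, `s₁+s₂ ≥ s` and `u+v ≥ F(s₁,t₂;2,1)`, then
`u + max (F(s₂,t₁+v;k,k-1)) (s₂+v) ≥ F(s,t;k+1,k)`. -/
theorem stmt_12 (k : ℕ) (hk : 2 ≤ k) (s t t₁ t₂ s₁ s₂ u v : ℝ)
    (hs0 : 0 ≤ s) (hsk : s ≤ k) (ht0 : 0 ≤ t) (ht : t ≤ (k : ℝ) + 1)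
    (ht1 : 0 ≤ t₁) (ht1' : t₁ ≤ (k : ℝ) - 1) (ht2 : 0 ≤ t₂) (ht2' : t₂ ≤ 2)
    (hs1 : 0 ≤ s₁) (hs1' : s₁ ≤ 1) (hs2 : 0 ≤ s₂) (hs2' : s₂ ≤ s)
    (hu : s₁ ≤ u) (hu' : u ≤ 1) (hv : 0 ≤ v) (hv' : v ≤ 1)
    (hT : t ≤ t₁ + t₂) (hS : s ≤ s₁ + s₂) (hUV : fIndex 2 1 s₁ t₂ ≤ u + v) :
    fIndex (k + 1) k s t ≤ u + max (fIndex k (k - 1) s₂ (t₁ + v)) (s₂ + v) :=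
  stmt_12_general k hk s t t₁ t₂ s₁ s₂ u v hs0 ht ht1' ht2' hs1 hs2 hu hv' hT hS hUV
end
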